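/- arXiv:2007.00722 — 6 statements merged into one kernel-verified Lean document; each statement's English description precedes it below -/
import Mathlib

section
/- For any two tasks θ and θ' over the same finite state set S, action set A and discount γ, any deterministic stationary policy π, and any state s, the value functions satisfy |V^π_θ(s) − V^π_{θ'}(s)| ≤ Σ_{s',a'} ν^π_{θ'}(s',a';s) · [ |r_θ(s',a') − r_{θ'}(s',a')| + γ·|(p_θ(s',a') − p_{θ'}(s',a'))ᵀ V^π_θ| ], where (p_θ(s',a') − p_{θ'}(s',a'))ᵀ V^π_θ denotes Σ_{s''}(p_θ(s''|s',a') − p_{θ'}(s''|s',a'))·V^π_θ(s''). -/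
/-!
Statement 0 (Simulation lemma, first inequality).

A task `θ` is a discounted MDP over a finite state set `S` and finite action set `A`, with
transition kernel `p`, mean reward `r` (taking values in `[0,1]`) and discount `γ ∈ [0,1)`.
`V^π_θ` is characterized as the (unique) solution of the Bellman evaluation equation, and the
discounted state-action visitation frequency `ν^π_θ(s',a';s)` as the unique solution of its
defining recursion.
-/

/-- A finite discounted MDP model: transition probabilities `p` and mean rewards `r` in `[0,1]`. -/
structure MDP (S A : Type*) [Fintype S] [Fintype A] where
  p : S → A → S → ℝ
  r : S → A → ℝ
  p_nonneg : ∀ s a s', 0 ≤ p s a s'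
  p_sum_one : ∀ s a, ∑ s', p s a s' = 1
  r_nonneg : ∀ s a, 0 ≤ r s a
  r_le_one : ∀ s a, r s a ≤ 1

variable {S A : Type*} [Fintype S] [Fintype A] [DecidableEq S] [DecidableEq A]

/-- `V` is the value function of the deterministic stationary policy `π` in `M` with
discount `γ`, i.e. `V` satisfies the Bellman evaluation equation of `π`. -/
def IsValue (M : MDP S A) (γ : ℝ) (π : S → A) (V : S → ℝ) : Prop :=
  ∀ s, V s = M.r s (π s) + γ * ∑ s', M.p s (π s) s' * V s'

/-- `ν` is the discounted state-action visitation frequency of `π` in `M`: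
`ν s' a' s = ∑_t γ^t P^π_M (S_t = s', A_t = a' | S_0 = s)`, characterized by its recursion. -/
def IsVisit (M : MDP S A) (γ : ℝ) (π : S → A) (ν : S → A → S → ℝ) : Prop :=
  ∀ s' a' s, ν s' a' s =
    (if s' = s ∧ a' = π s then 1 else 0) + γ * ∑ s'', M.p s (π s) s'' * ν s' a' s''

private lemma triple_comm {S A : Type*} [Fintype S] [Fintype A] (f : S → A → S → ℝ) :
    ∑ s' : S, ∑ a' : A, ∑ s'' : S, f s' a' s'' = ∑ s'' : S, ∑ s' : S, ∑ a' : A, f s' a' s'' :=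
  calc ∑ s' : S, ∑ a' : A, ∑ s'' : S, f s' a' s''
      = ∑ s' : S, ∑ s'' : S, ∑ a' : A, f s' a' s'' :=
        Finset.sum_congr rfl fun s' _ => Finset.sum_comm
    _ = ∑ s'' : S, ∑ s' : S, ∑ a' : A, f s' a' s'' := Finset.sum_comm

/-- For any two tasks `θ, θ'`, any deterministic stationary policy `π`, and
any state `s`,
`|V^π_θ(s) − V^π_{θ'}(s)| ≤ ∑_{s',a'} ν^π_{θ'}(s',a';s) ·
   ( |r_θ(s',a') − r_{θ'}(s',a')| + γ|(p_θ(s',a') − p_{θ'}(s',a'))ᵀ V^π_θ| )`. -/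
theorem simulation_lemma_policy
    (γ : ℝ) (hγ0 : 0 ≤ γ) (hγ1 : γ < 1)
    (Mθ Mθ' : MDP S A) (π : S → A) (V V' : S → ℝ) (ν : S → A → S → ℝ)
    (hV : IsValue Mθ γ π V) (hV' : IsValue Mθ' γ π V') (hν : IsVisit Mθ' γ π ν) (s : S) :
    |V s - V' s| ≤ ∑ s', ∑ a', ν s' a' s *
      (|Mθ.r s' a' - Mθ'.r s' a'| +
        γ * |∑ s'', (Mθ.p s' a' s'' - Mθ'.p s' a' s'') * V s''|) := by

  classical
  set g : S → A → ℝ := fun s' a' =>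
    |Mθ.r s' a' - Mθ'.r s' a'| +
      γ * |∑ s'', (Mθ.p s' a' s'' - Mθ'.p s' a' s'') * V s''| with hg
  set W : S → ℝ := fun t => ∑ s', ∑ a', ν s' a' t * g s' a' with hW
  set D : S → ℝ := fun t => |V t - V' t| with hD
  have hg0 : ∀ t a, 0 ≤ g t a := by
    intro t a
    have h1 : (0:ℝ) ≤ |Mθ.r t a - Mθ'.r t a| := abs_nonneg _
    have h2 : (0:ℝ) ≤ |∑ s'', (Mθ.p t a s'' - Mθ'.p t a s'') * V s''| := abs_nonneg _
    have := mul_nonneg hγ0 h2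
    simp only [hg]
    linarith
  -- W satisfies the Bellman-type recursion
  have hWrec : ∀ t, W t = g t (π t) + γ * ∑ s'', Mθ'.p t (π t) s'' * W s'' := by
    intro t
    have h1 : W t = ∑ s', ∑ a',
        ((if s' = t ∧ a' = π t then (1:ℝ) else 0)
          + γ * ∑ s'', Mθ'.p t (π t) s'' * ν s' a' s'') * g s' a' := by
      simp only [hW]
      refine Finset.sum_congr rfl fun s' _ => Finset.sum_congr rfl fun a' _ => ?_
      rw [hν s' a' t]
    rw [h1]
    have h2 : ∑ s', ∑ a',
        ((if s' = t ∧ a' = π t then (1:ℝ) else 0)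
          + γ * ∑ s'', Mθ'.p t (π t) s'' * ν s' a' s'') * g s' a'
        = (∑ s', ∑ a', (if s' = t ∧ a' = π t then (1:ℝ) else 0) * g s' a')
          + ∑ s', ∑ a', (γ * ∑ s'', Mθ'.p t (π t) s'' * ν s' a' s'') * g s' a' := by
      rw [← Finset.sum_add_distrib]
      refine Finset.sum_congr rfl fun s' _ => ?_
      rw [← Finset.sum_add_distrib]
      refine Finset.sum_congr rfl fun a' _ => ?_
      ring
    rw [h2]
    congr 1
    · simp [Finset.sum_ite_eq, ite_and]
    · calc ∑ s', ∑ a', (γ * ∑ s'', Mθ'.p t (π t) s'' * ν s' a' s'') * g s' a'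
          = ∑ s', ∑ a', ∑ s'', γ * (Mθ'.p t (π t) s'' * ν s' a' s'') * g s' a' := by
            refine Finset.sum_congr rfl fun s' _ => Finset.sum_congr rfl fun a' _ => ?_
            rw [Finset.mul_sum, Finset.sum_mul]
        _ = ∑ s'', ∑ s', ∑ a', γ * (Mθ'.p t (π t) s'' * ν s' a' s'') * g s' a' :=
            triple_comm _
        _ = γ * ∑ s'', Mθ'.p t (π t) s'' * ∑ s', ∑ a', ν s' a' s'' * g s' a' := by
            rw [Finset.mul_sum]
            refine Finset.sum_congr rfl fun s'' _ => ?_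
            rw [Finset.mul_sum, Finset.mul_sum]
            refine Finset.sum_congr rfl fun s' _ => ?_
            rw [Finset.mul_sum, Finset.mul_sum]
            refine Finset.sum_congr rfl fun a' _ => ?_
            ring
        _ = γ * ∑ s'', Mθ'.p t (π t) s'' * W s'' := by simp only [hW]
  -- D satisfies the corresponding inequality
  have hDrec : ∀ t, D t ≤ g t (π t) + γ * ∑ s'', Mθ'.p t (π t) s'' * D s'' := by
    intro t
    have e1 : V t - V' t = (Mθ.r t (π t) - Mθ'.r t (π t))
        + γ * (∑ s'', (Mθ.p t (π t) s'' - Mθ'.p t (π t) s'') * V s'')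
        + γ * (∑ s'', Mθ'.p t (π t) s'' * (V s'' - V' s'')) := by
      rw [hV t, hV' t]
      have : ∑ s'', (Mθ.p t (π t) s'' - Mθ'.p t (π t) s'') * V s''
           + ∑ s'', Mθ'.p t (π t) s'' * (V s'' - V' s'')
           = ∑ s'', Mθ.p t (π t) s'' * V s'' - ∑ s'', Mθ'.p t (π t) s'' * V' s'' := by
        rw [← Finset.sum_add_distrib, ← Finset.sum_sub_distrib]
        refine Finset.sum_congr rfl fun u _ => ?_
        ring
      nlinarith [this]
    have habs : D t ≤ |Mθ.r t (π t) - Mθ'.r t (π t)|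
        + γ * |∑ s'', (Mθ.p t (π t) s'' - Mθ'.p t (π t) s'') * V s''|
        + γ * |∑ s'', Mθ'.p t (π t) s'' * (V s'' - V' s'')| := by
      simp only [hD]
      rw [e1]
      calc |_ + _ + _| ≤ |(Mθ.r t (π t) - Mθ'.r t (π t))
            + γ * (∑ s'', (Mθ.p t (π t) s'' - Mθ'.p t (π t) s'') * V s'')|
            + |γ * (∑ s'', Mθ'.p t (π t) s'' * (V s'' - V' s''))| := abs_add_le _ _
        _ ≤ |Mθ.r t (π t) - Mθ'.r t (π t)|
            + |γ * (∑ s'', (Mθ.p t (π t) s'' - Mθ'.p t (π t) s'') * V s'')|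
            + |γ * (∑ s'', Mθ'.p t (π t) s'' * (V s'' - V' s''))| := by
              have := abs_add_le (Mθ.r t (π t) - Mθ'.r t (π t))
                (γ * (∑ s'', (Mθ.p t (π t) s'' - Mθ'.p t (π t) s'') * V s''))
              linarith
        _ = _ := by rw [abs_mul, abs_mul, abs_of_nonneg hγ0]
    have hlast : |∑ s'', Mθ'.p t (π t) s'' * (V s'' - V' s'')|
        ≤ ∑ s'', Mθ'.p t (π t) s'' * D s'' := by
      calc |∑ s'', Mθ'.p t (π t) s'' * (V s'' - V' s'')|
          ≤ ∑ s'', |Mθ'.p t (π t) s'' * (V s'' - V' s'')| :=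
            Finset.abs_sum_le_sum_abs _ _
        _ = ∑ s'', Mθ'.p t (π t) s'' * D s'' := by
            refine Finset.sum_congr rfl fun u _ => ?_
            rw [abs_mul, abs_of_nonneg (Mθ'.p_nonneg t (π t) u)]
    have := mul_le_mul_of_nonneg_left hlast hγ0
    simp only [hg]
    linarith
  -- conclude D ≤ W by a minimum argument
  have hmain : ∀ t, D t ≤ W t := by
    by_contra hcon
    push_neg at hcon
    obtain ⟨t0, ht0⟩ := hcon
    obtain ⟨t1, -, ht1⟩ := Finset.exists_min_image Finset.univ (fun t => W t - D t)
      ⟨t0, Finset.mem_univ t0⟩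
    have hm_neg : W t1 - D t1 < 0 := lt_of_le_of_lt (ht1 t0 (Finset.mem_univ t0)) (by linarith)
    have hsum : ∑ s'', Mθ'.p t1 (π t1) s'' * (W s'' - D s'') ≥ (W t1 - D t1) := by
      calc ∑ s'', Mθ'.p t1 (π t1) s'' * (W s'' - D s'')
          ≥ ∑ s'', Mθ'.p t1 (π t1) s'' * (W t1 - D t1) := by
            refine Finset.sum_le_sum fun u _ => ?_
            exact mul_le_mul_of_nonneg_left (ht1 u (Finset.mem_univ u))
              (Mθ'.p_nonneg t1 (π t1) u)
        _ = (W t1 - D t1) := by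
            rw [← Finset.sum_mul, Mθ'.p_sum_one, one_mul]
    have hstep : W t1 - D t1 ≥ γ * (W t1 - D t1) := by
      have h1 := hWrec t1
      have h2 := hDrec t1
      have h3 : ∑ s'', Mθ'.p t1 (π t1) s'' * (W s'' - D s'')
          = ∑ s'', Mθ'.p t1 (π t1) s'' * W s'' - ∑ s'', Mθ'.p t1 (π t1) s'' * D s'' := by
        rw [← Finset.sum_sub_distrib]
        refine Finset.sum_congr rfl fun u _ => ?_
        ring
      nlinarith
    nlinarith
  exact hmain s
end

section
/- For any two tasks θ and θ' over the same finite state set S, action set A and discount γ, and any state s, the optimal value functions satisfy |V*_{θ'}(s) − V*_θ(s)| ≤ max_{π ∈ {π*_θ, π*_{θ'}}} Σ_{s',a'} ν^π_{θ'}(s',a';s) · [ |r_θ(s',a') − r_{θ'}(s',a')| + γ·|(p_θ(s',a') − p_{θ'}(s',a'))ᵀ V*_θ| ]. -/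
variable {S A : Type*} [Fintype S] [Fintype A] [DecidableEq S] [DecidableEq A]

/-- `π` is an optimal policy of `M` and `V` its optimal value function: `V` is the value
function of `π` and it dominates, at every state simultaneously, the value function of any
other deterministic stationary policy. -/
def IsOptimal (M : MDP S A) (γ : ℝ) (π : S → A) (V : S → ℝ) : Prop :=
  IsValue M γ π V ∧ ∀ (π' : S → A) (V' : S → ℝ), IsValue M γ π' V' → ∀ s, V' s ≤ V s

set_option linter.unusedSectionVars false

/-- Contraction comparison: if `h ≤ γ P h` pointwise with `P` row-stochastic and
`0 ≤ γ < 1`, then `h ≤ 0`. -/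
lemma aux_comparison [Nonempty S] (γ : ℝ) (hγ0 : 0 ≤ γ) (hγ1 : γ < 1)
    (p : S → S → ℝ) (hp : ∀ t t', 0 ≤ p t t') (hp1 : ∀ t, ∑ t', p t t' = 1)
    (h : S → ℝ) (hh : ∀ t, h t ≤ γ * ∑ t', p t t' * h t') : ∀ t, h t ≤ 0 := by
  obtain ⟨t0, -, ht0⟩ := Finset.exists_max_image Finset.univ h Finset.univ_nonempty
  have hmax : ∀ t, h t ≤ h t0 := fun t => ht0 t (Finset.mem_univ t)
  have hsum : ∑ t', p t0 t' * h t' ≤ h t0 := by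
    calc ∑ t', p t0 t' * h t' ≤ ∑ t', p t0 t' * h t0 :=
          Finset.sum_le_sum fun t' _ => mul_le_mul_of_nonneg_left (hmax t') (hp t0 t')
      _ = h t0 := by rw [← Finset.sum_mul, hp1 t0, one_mul]
  have h1 : h t0 ≤ γ * h t0 := (hh t0).trans (mul_le_mul_of_nonneg_left hsum hγ0)
  have h2 : h t0 ≤ 0 := by nlinarith
  exact fun t => (hmax t).trans h2

/-- Every stationary policy has a value function (Banach fixed point). -/
lemma aux_exists_value [Nonempty S] (M : MDP S A) (γ : ℝ) (hγ0 : 0 ≤ γ) (hγ1 : γ < 1)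
    (π : S → A) : ∃ V, IsValue M γ π V := by
  set T : (S → ℝ) → (S → ℝ) :=
    fun V s => M.r s (π s) + γ * ∑ s', M.p s (π s) s' * V s' with hT
  have hL : LipschitzWith ⟨γ, hγ0⟩ T := by
    apply LipschitzWith.of_dist_le_mul
    intro V W
    have hc : (0:ℝ) ≤ γ * dist V W := mul_nonneg hγ0 dist_nonneg
    refine (dist_pi_le_iff hc).mpr fun t => ?_
    have : T V t - T W t = γ * ∑ s', M.p t (π t) s' * (V s' - W s') := by
      simp only [hT, mul_sub, Finset.sum_sub_distrib, mul_sub]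
      ring
    rw [Real.dist_eq, this, abs_mul, abs_of_nonneg hγ0]
    have habs : |∑ s', M.p t (π t) s' * (V s' - W s')| ≤ dist V W := by
      calc |∑ s', M.p t (π t) s' * (V s' - W s')|
          ≤ ∑ s', |M.p t (π t) s' * (V s' - W s')| := Finset.abs_sum_le_sum_abs _ _
        _ ≤ ∑ s', M.p t (π t) s' * dist V W := by
            refine Finset.sum_le_sum fun s' _ => ?_
            rw [abs_mul, abs_of_nonneg (M.p_nonneg t (π t) s')]
            exact mul_le_mul_of_nonneg_left
              (by rw [← Real.dist_eq]; exact dist_le_pi_dist V W s')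
              (M.p_nonneg t (π t) s')
        _ = dist V W := by rw [← Finset.sum_mul, M.p_sum_one, one_mul]
    calc γ * |∑ s', M.p t (π t) s' * (V s' - W s')| ≤ γ * dist V W :=
      mul_le_mul_of_nonneg_left habs hγ0
    _ = ↑(⟨γ, hγ0⟩ : NNReal) * dist V W := rfl
  have hC : ContractingWith ⟨γ, hγ0⟩ T := ⟨by exact_mod_cast hγ1, hL⟩
  refine ⟨hC.fixedPoint T, fun t => ?_⟩
  conv_lhs => rw [← hC.fixedPoint_isFixedPt]

/-- Bellman optimality inequality: the optimal value dominates every one-step lookahead. -/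
lemma aux_bellman_ineq [Nonempty S] (M : MDP S A) (γ : ℝ) (hγ0 : 0 ≤ γ) (hγ1 : γ < 1)
    (π : S → A) (V : S → ℝ) (hopt : IsOptimal M γ π V) (s : S) (a : A) :
    M.r s a + γ * ∑ s', M.p s a s' * V s' ≤ V s := by
  classical
  set π' : S → A := Function.update π s a with hπ'
  obtain ⟨V', hV'⟩ := aux_exists_value M γ hγ0 hγ1 π'
  have hle : ∀ t, V' t ≤ V t := hopt.2 π' V' hV'
  set h : S → ℝ := fun t => V t - V' t with hh
  have hnn : ∀ t, 0 ≤ h t := fun t => sub_nonneg.mpr (hle t)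
  set q : ℝ := M.r s a + γ * ∑ s', M.p s a s' * V s' - V s with hq
  -- recursion for h
  have hrec : ∀ t, t ≠ s → h t = γ * ∑ t', M.p t (π t) t' * h t' := by
    intro t ht
    have h1 := hopt.1 t
    have h2 := hV' t
    rw [hπ', Function.update_of_ne ht] at h2
    simp only [hh, h1, h2, mul_sub, Finset.sum_sub_distrib]
    ring
  have hrecs : h s = -q + γ * ∑ t', M.p s a t' * h t' := by
    have h2 := hV' s
    rw [hπ', Function.update_self] at h2
    simp only [hh, hq, h2, mul_sub, Finset.sum_sub_distrib]
    ring
  obtain ⟨t0, -, ht0⟩ := Finset.exists_max_image Finset.univ h Finset.univ_nonempty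
  have hmax : ∀ t, h t ≤ h t0 := fun t => ht0 t (Finset.mem_univ t)
  have hsum : ∀ (p : S → ℝ), (∀ t', 0 ≤ p t') → (∑ t', p t' = 1) →
      ∑ t', p t' * h t' ≤ h t0 := by
    intro p hp hp1
    calc ∑ t', p t' * h t' ≤ ∑ t', p t' * h t0 :=
          Finset.sum_le_sum fun t' _ => mul_le_mul_of_nonneg_left (hmax t') (hp t')
      _ = h t0 := by rw [← Finset.sum_mul, hp1, one_mul]
  by_cases hcase : t0 = s
  · have hγs := mul_le_mul_of_nonneg_left
      (hsum (M.p s a) (M.p_nonneg s a) (M.p_sum_one s a)) hγ0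
    have h1 : h t0 ≤ -q + γ * h t0 := by
      calc h t0 = -q + γ * ∑ t', M.p s a t' * h t' := by rw [hcase]; exact hrecs
        _ ≤ -q + γ * h t0 := by linarith
    have h0 : 0 ≤ h t0 := hnn t0
    nlinarith [h1, h0, hγ1, hq]
  · have hγs := mul_le_mul_of_nonneg_left
      (hsum (M.p t0 (π t0)) (M.p_nonneg t0 (π t0)) (M.p_sum_one t0 (π t0))) hγ0
    have h1 : h t0 ≤ γ * h t0 := by
      calc h t0 = γ * ∑ t', M.p t0 (π t0) t' * h t' := hrec t0 hcase
        _ ≤ γ * h t0 := hγs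
    have hz : h t0 ≤ 0 := by
      by_contra hpos
      push_neg at hpos
      have := mul_lt_mul_of_pos_right hγ1 hpos
      rw [one_mul] at this
      linarith
    have hzero : ∀ t, h t = 0 := fun t => le_antisymm ((hmax t).trans hz) (hnn t)
    have hz2 := hrecs
    simp only [hzero] at hz2
    simp only [mul_zero, Finset.sum_const_zero] at hz2
    linarith

/-- The weighted visitation sum satisfies the associated Bellman-type recursion. -/
lemma aux_visit_rec (M' : MDP S A) (γ : ℝ) (π : S → A) (ν : S → A → S → ℝ)
    (hν : IsVisit M' γ π ν) (G : S → A → ℝ) (t : S) :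
    (∑ s', ∑ a', ν s' a' t * G s' a') =
      G t (π t) + γ * ∑ s'', M'.p t (π t) s'' * ∑ s', ∑ a', ν s' a' s'' * G s' a' := by
  have step : ∀ s' a', ν s' a' t * G s' a' =
      (if s' = t ∧ a' = π t then G s' a' else 0)
        + ∑ s'', γ * (M'.p t (π t) s'' * (ν s' a' s'' * G s' a')) := by
    intro s' a'
    rw [hν s' a' t, add_mul]
    congr 1
    · split <;> simp
    · rw [mul_assoc, Finset.sum_mul, Finset.mul_sum]
      exact Finset.sum_congr rfl fun s'' _ => by ring
  have hleft : (∑ s', ∑ a', ν s' a' t * G s' a')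
      = (∑ s', ∑ a', (if s' = t ∧ a' = π t then G s' a' else 0))
        + ∑ s', ∑ a', ∑ s'', γ * (M'.p t (π t) s'' * (ν s' a' s'' * G s' a')) := by
    rw [← Finset.sum_add_distrib]
    refine Finset.sum_congr rfl fun s' _ => ?_
    rw [← Finset.sum_add_distrib]
    exact Finset.sum_congr rfl fun a' _ => step s' a'
  have hind : (∑ s', ∑ a', (if s' = t ∧ a' = π t then G s' a' else 0)) = G t (π t) := by
    simp [ite_and, Finset.sum_ite_eq]
  have hswap : (∑ s', ∑ a', ∑ s'', γ * (M'.p t (π t) s'' * (ν s' a' s'' * G s' a')))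
      = γ * ∑ s'', M'.p t (π t) s'' * ∑ s', ∑ a', ν s' a' s'' * G s' a' := by
    have inner : ∀ s', (∑ a', ∑ s'', γ * (M'.p t (π t) s'' * (ν s' a' s'' * G s' a')))
        = ∑ s'', ∑ a', γ * (M'.p t (π t) s'' * (ν s' a' s'' * G s' a')) :=
      fun s' => Finset.sum_comm
    calc (∑ s', ∑ a', ∑ s'', γ * (M'.p t (π t) s'' * (ν s' a' s'' * G s' a')))
        = ∑ s', ∑ s'', ∑ a', γ * (M'.p t (π t) s'' * (ν s' a' s'' * G s' a')) :=
          Finset.sum_congr rfl fun s' _ => inner s'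
      _ = ∑ s'', ∑ s', ∑ a', γ * (M'.p t (π t) s'' * (ν s' a' s'' * G s' a')) :=
          Finset.sum_comm
      _ = γ * ∑ s'', M'.p t (π t) s'' * ∑ s', ∑ a', ν s' a' s'' * G s' a' := by
          simp only [Finset.mul_sum]
  rw [hleft, hind, hswap]

/-- One-sided simulation bound. -/
lemma aux_one_side [Nonempty S] (γ : ℝ) (hγ0 : 0 ≤ γ) (hγ1 : γ < 1)
    (M' : MDP S A) (π : S → A) (e : S → ℝ) (G : S → A → ℝ)
    (ν : S → A → S → ℝ) (hν : IsVisit M' γ π ν)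
    (key : ∀ t, e t ≤ G t (π t) + γ * ∑ s'', M'.p t (π t) s'' * e s'') :
    ∀ t, e t ≤ ∑ s', ∑ a', ν s' a' t * G s' a' := by
  set F : S → ℝ := fun t => ∑ s', ∑ a', ν s' a' t * G s' a' with hF
  have hFrec : ∀ t, F t = G t (π t) + γ * ∑ s'', M'.p t (π t) s'' * F s'' :=
    fun t => aux_visit_rec M' γ π ν hν G t
  have hcmp : ∀ t, (e t - F t) ≤ γ * ∑ t', M'.p t (π t) t' * (e t' - F t') := by
    intro t
    have h1 := key t
    have h2 := hFrec t
    have h3 : γ * ∑ t', M'.p t (π t) t' * (e t' - F t')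
        = γ * (∑ t', M'.p t (π t) t' * e t') - γ * (∑ t', M'.p t (π t) t' * F t') := by
      simp only [mul_sub, Finset.sum_sub_distrib]
      try ring
    rw [h3]
    linarith
  have hcomp := aux_comparison γ hγ0 hγ1 (fun t => M'.p t (π t))
    (fun t t' => M'.p_nonneg t (π t) t') (fun t => M'.p_sum_one t (π t))
    (fun t => e t - F t) hcmp
  intro t
  have h4 : e t - F t ≤ 0 := hcomp t
  have h5 : F t = ∑ s', ∑ a', ν s' a' t * G s' a' := rfl
  linarith [h5 ▸ h4]

/-- For any two tasks `θ, θ'` and any state `s`,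
`|V*_{θ'}(s) − V*_θ(s)| ≤ max_{π ∈ {π*_θ, π*_{θ'}}} ∑_{s',a'} ν^π_{θ'}(s',a';s) ·
   ( |r_θ(s',a') − r_{θ'}(s',a')| + γ|(p_θ(s',a') − p_{θ'}(s',a'))ᵀ V*_θ| )`. -/
theorem simulation_lemma_optimal
    (γ : ℝ) (hγ0 : 0 ≤ γ) (hγ1 : γ < 1)
    (Mθ Mθ' : MDP S A) (πs πs' : S → A) (Vs Vs' : S → ℝ)
    (hopt : IsOptimal Mθ γ πs Vs) (hopt' : IsOptimal Mθ' γ πs' Vs')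
    (ν ν' : S → A → S → ℝ)
    (hν : IsVisit Mθ' γ πs ν) (hν' : IsVisit Mθ' γ πs' ν') (s : S) :
    |Vs' s - Vs s| ≤
      max
        (∑ s', ∑ a', ν s' a' s *
          (|Mθ.r s' a' - Mθ'.r s' a'| +
            γ * |∑ s'', (Mθ.p s' a' s'' - Mθ'.p s' a' s'') * Vs s''|))
        (∑ s', ∑ a', ν' s' a' s *
          (|Mθ.r s' a' - Mθ'.r s' a'| +
            γ * |∑ s'', (Mθ.p s' a' s'' - Mθ'.p s' a' s'') * Vs s''|)) := by
  have : Nonempty S := ⟨s⟩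
  set G : S → A → ℝ := fun s' a' =>
    |Mθ.r s' a' - Mθ'.r s' a'| +
      γ * |∑ s'', (Mθ.p s' a' s'' - Mθ'.p s' a' s'') * Vs s''| with hG
  -- shared helper: |∑ (p' - p) Vs| comparison
  have habs : ∀ (t : S) (a : A),
      γ * ∑ s'', (Mθ'.p t a s'' - Mθ.p t a s'') * Vs s''
        ≤ γ * |∑ s'', (Mθ.p t a s'' - Mθ'.p t a s'') * Vs s''| := by
    intro t a
    refine mul_le_mul_of_nonneg_left ?_ hγ0
    have : (∑ s'', (Mθ'.p t a s'' - Mθ.p t a s'') * Vs s'')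
        = -∑ s'', (Mθ.p t a s'' - Mθ'.p t a s'') * Vs s'' := by
      rw [← Finset.sum_neg_distrib]
      exact Finset.sum_congr rfl fun s'' _ => by ring
    rw [this]
    exact neg_le_abs _
  -- Direction A: Vs' - Vs ≤ F(ν')
  have dirA : Vs' s - Vs s ≤ ∑ s', ∑ a', ν' s' a' s * G s' a' := by
    refine aux_one_side γ hγ0 hγ1 Mθ' πs' (fun t => Vs' t - Vs t) G ν' hν' (fun t => ?_) s
    have h1 := hopt'.1 t
    have h2 := aux_bellman_ineq Mθ γ hγ0 hγ1 πs Vs hopt t (πs' t)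
    have split : γ * ∑ s'', Mθ'.p t (πs' t) s'' * Vs' s''
        = γ * ∑ s'', (Mθ'.p t (πs' t) s'' - Mθ.p t (πs' t) s'') * Vs s''
          + γ * ∑ s'', Mθ.p t (πs' t) s'' * Vs s''
          + γ * ∑ s'', Mθ'.p t (πs' t) s'' * (Vs' s'' - Vs s'') := by
      simp only [sub_mul, mul_sub, Finset.sum_sub_distrib]
      ring
    have hr : Mθ'.r t (πs' t) - Mθ.r t (πs' t) ≤ |Mθ.r t (πs' t) - Mθ'.r t (πs' t)| := by
      rw [abs_sub_comm]; exact le_abs_self _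
    have hG' := habs t (πs' t)
    simp only [hG]
    linarith [h1, h2]
  -- Direction B: Vs - Vs' ≤ F(ν)
  have dirB : Vs s - Vs' s ≤ ∑ s', ∑ a', ν s' a' s * G s' a' := by
    refine aux_one_side γ hγ0 hγ1 Mθ' πs (fun t => Vs t - Vs' t) G ν hν (fun t => ?_) s
    have h1 := hopt.1 t
    have h2 := aux_bellman_ineq Mθ' γ hγ0 hγ1 πs' Vs' hopt' t (πs t)
    have split : γ * ∑ s'', Mθ.p t (πs t) s'' * Vs s''
        = γ * ∑ s'', (Mθ.p t (πs t) s'' - Mθ'.p t (πs t) s'') * Vs s''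
          + γ * ∑ s'', Mθ'.p t (πs t) s'' * Vs' s''
          + γ * ∑ s'', Mθ'.p t (πs t) s'' * (Vs s'' - Vs' s'') := by
      simp only [sub_mul, mul_sub, Finset.sum_sub_distrib]
      ring
    have hr : Mθ.r t (πs t) - Mθ'.r t (πs t) ≤ |Mθ.r t (πs t) - Mθ'.r t (πs t)| :=
      le_abs_self _
    have hG' : γ * ∑ s'', (Mθ.p t (πs t) s'' - Mθ'.p t (πs t) s'') * Vs s''
        ≤ γ * |∑ s'', (Mθ.p t (πs t) s'' - Mθ'.p t (πs t) s'') * Vs s''| :=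
      mul_le_mul_of_nonneg_left (le_abs_self _) hγ0
    simp only [hG]
    linarith [h1, h2]
  rw [abs_sub_le_iff]
  exact ⟨dirA.trans (le_max_right _ _), dirB.trans (le_max_left _ _)⟩
end

section
/- (Value-function error decomposition.) For any two tasks θ and θ' over the same finite state set S, action set A and discount γ, and any state s, the suboptimality in θ' of the optimal policy of θ satisfies |V*_{θ'}(s) − V^{π*_θ}_{θ'}(s)| ≤ 2 · max_{π ∈ {π*_θ, π*_{θ'}}} Σ_{s',a'} ν^π_{θ'}(s',a';s) · [ |r_θ(s',a') − r_{θ'}(s',a')| + γ·|(p_θ(s',a') − p_{θ'}(s',a'))ᵀ V*_θ| ]. -/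
variable {S A : Type*} [Fintype S] [Fintype A] [DecidableEq S] [DecidableEq A]

section Helpers

lemma min_nonneg' {γ : ℝ} (hγ0 : 0 ≤ γ) (hγ1 : γ < 1)
    (P : S → S → ℝ) (hP0 : ∀ s s', 0 ≤ P s s') (hP1 : ∀ s, ∑ s', P s s' = 1)
    (d : S → ℝ) (hd : ∀ s, γ * ∑ s', P s s' * d s' ≤ d s) : ∀ s, 0 ≤ d s := by
  cases isEmpty_or_nonempty S with
  | inl h => intro s; exact (IsEmpty.false s).elim
  | inr h =>
    obtain ⟨s0, -, hs0⟩ := Finset.exists_min_image Finset.univ d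
      ⟨Classical.arbitrary S, Finset.mem_univ _⟩
    have hmin : ∀ t, d s0 ≤ d t := fun t => hs0 t (Finset.mem_univ t)
    have h1 : d s0 ≤ ∑ s', P s0 s' * d s' := by
      calc d s0 = ∑ s', P s0 s' * d s0 := by
              rw [← Finset.sum_mul, hP1, one_mul]
        _ ≤ ∑ s', P s0 s' * d s' :=
              Finset.sum_le_sum fun t _ => mul_le_mul_of_nonneg_left (hmin t) (hP0 s0 t)
    have h2 : γ * d s0 ≤ d s0 := le_trans (mul_le_mul_of_nonneg_left h1 hγ0) (hd s0)
    have h3 : 0 ≤ d s0 := by nlinarith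
    intro t; exact le_trans h3 (hmin t)

lemma exists_value {γ : ℝ} (hγ0 : 0 ≤ γ) (hγ1 : γ < 1) (M : MDP S A) (π : S → A) :
    ∃ V, IsValue M γ π V := by
  classical
  set P : Matrix S S ℝ := fun s s' => M.p s (π s) s' with hP
  set L : Matrix S S ℝ := 1 - γ • P with hL
  have hmul : ∀ x : S → ℝ, ∀ t, L.mulVec x t = x t - γ * ∑ s', P t s' * x s' := by
    intro x t
    simp only [hL, Matrix.mulVec, dotProduct, Matrix.sub_apply, Matrix.smul_apply,
      Matrix.one_apply, smul_eq_mul, sub_mul, ite_mul, one_mul, zero_mul,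
      Finset.sum_sub_distrib, Finset.sum_ite_eq, Finset.mem_univ, if_true, Finset.mul_sum]
    ring_nf
  have hinj : Function.Injective L.mulVecLin := by
    rw [← LinearMap.ker_eq_bot, LinearMap.ker_eq_bot']
    intro x hx
    have hx0 : ∀ t, x t = γ * ∑ s', P t s' * x s' := by
      intro t
      have := congrFun hx t
      rw [Matrix.mulVecLin_apply] at this
      have h2 := hmul x t
      rw [this] at h2
      simp at h2
      linarith [h2]
    have hpos : ∀ t, 0 ≤ x t :=
      min_nonneg' hγ0 hγ1 P (fun s s' => M.p_nonneg s (π s) s')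
        (fun s => M.p_sum_one s (π s)) x (fun t => le_of_eq (hx0 t).symm)
    have hneg : ∀ t, 0 ≤ -x t := by
      refine min_nonneg' hγ0 hγ1 P (fun s s' => M.p_nonneg s (π s) s')
        (fun s => M.p_sum_one s (π s)) (fun t => -x t) ?_
      intro t
      have : ∑ s', P t s' * -x s' = -∑ s', P t s' * x s' := by
        simp [Finset.sum_neg_distrib]
      rw [this]
      have := hx0 t
      linarith [hx0 t]
    funext t
    have := hpos t; have := hneg t
    simp only [Pi.zero_apply]
    linarith
  have hsurj : Function.Surjective L.mulVecLin :=
    (LinearMap.injective_iff_surjective).mp hinj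
  obtain ⟨V, hV⟩ := hsurj (fun t => M.r t (π t))
  refine ⟨V, fun t => ?_⟩
  have := congrFun hV t
  rw [Matrix.mulVecLin_apply, hmul V t] at this
  have : V t - γ * ∑ s', P t s' * V s' = M.r t (π t) := this
  simp only [hP] at this ⊢
  linarith

lemma visit_nonneg {γ : ℝ} (hγ0 : 0 ≤ γ) (hγ1 : γ < 1) {M : MDP S A} {π : S → A}
    {ν : S → A → S → ℝ} (hν : IsVisit M γ π ν) : ∀ s' a' s, 0 ≤ ν s' a' s := by
  intro s' a'
  refine min_nonneg' hγ0 hγ1 (fun s s'' => M.p s (π s) s'')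
    (fun s s'' => M.p_nonneg s (π s) s'') (fun s => M.p_sum_one s (π s))
    (fun s => ν s' a' s) ?_
  intro t
  rw [hν s' a' t]
  have : (0:ℝ) ≤ if s' = t ∧ a' = π t then 1 else 0 := by positivity
  linarith

lemma visit_bound {γ : ℝ} (hγ0 : 0 ≤ γ) (hγ1 : γ < 1) {M : MDP S A} {π : S → A}
    {ν : S → A → S → ℝ} (hν : IsVisit M γ π ν) (f e : S → ℝ) (he : ∀ t, 0 ≤ e t)
    (hf : ∀ t, f t ≤ e t + γ * ∑ s'', M.p t (π t) s'' * f s'') :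
    ∀ t, f t ≤ ∑ s', ν s' (π s') t * e s' := by
  set h : S → ℝ := fun t => ∑ s', ν s' (π s') t * e s' with hh
  have hrec : ∀ t, h t = e t + γ * ∑ s'', M.p t (π t) s'' * h s'' := by
    intro t
    have : h t = ∑ s', ((if s' = t then 1 else 0)
        + γ * ∑ s'', M.p t (π t) s'' * ν s' (π s') s'') * e s' := by
      refine Finset.sum_congr rfl fun s' _ => ?_
      congr 1
      rw [hν s' (π s') t]
      congr 1
      by_cases hst : s' = t
      · subst hst; simp
      · simp [hst]
    rw [this]
    simp only [add_mul, Finset.sum_add_distrib, ite_mul, one_mul, zero_mul,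
      Finset.sum_ite_eq', Finset.mem_univ, if_true]
    rw [Finset.mul_sum]
    congr 1
    calc ∑ x : S, (γ * ∑ s'', M.p t (π t) s'' * ν x (π x) s'') * e x
        = ∑ x : S, ∑ s'', γ * (M.p t (π t) s'' * (ν x (π x) s'' * e x)) := by
          refine Finset.sum_congr rfl fun x _ => ?_
          rw [Finset.mul_sum, Finset.sum_mul]
          exact Finset.sum_congr rfl fun s'' _ => by ring
      _ = ∑ s'', ∑ x : S, γ * (M.p t (π t) s'' * (ν x (π x) s'' * e x)) := Finset.sum_comm
      _ = ∑ i, γ * (M.p t (π t) i * h i) := by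
          refine Finset.sum_congr rfl fun i _ => ?_
          simp only [hh, Finset.mul_sum]
  intro t
  have key : ∀ t, 0 ≤ h t - f t := by
    refine min_nonneg' hγ0 hγ1 (fun s s'' => M.p s (π s) s'')
      (fun s s'' => M.p_nonneg s (π s) s'') (fun s => M.p_sum_one s (π s)) _ ?_
    intro u
    have h1 := hrec u
    have h2 := hf u
    have h3 : ∑ s'', M.p u (π u) s'' * (h s'' - f s'')
        = ∑ s'', M.p u (π u) s'' * h s'' - ∑ s'', M.p u (π u) s'' * f s'' := by
      rw [← Finset.sum_sub_distrib]; exact Finset.sum_congr rfl fun s'' _ => by ring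
    rw [h3]
    nlinarith
  linarith [key t]

lemma bellman_opt {γ : ℝ} (hγ0 : 0 ≤ γ) (hγ1 : γ < 1) {M : MDP S A} {πs : S → A}
    {Vs : S → ℝ} (hopt : IsOptimal M γ πs Vs) (π : S → A) :
    ∀ t, M.r t (π t) + γ * ∑ s'', M.p t (π t) s'' * Vs s'' ≤ Vs t := by
  classical
  set c : S → Prop := fun t => Vs t < M.r t (π t) + γ * ∑ s'', M.p t (π t) s'' * Vs s''
    with hc
  set πt : S → A := fun t => if c t then π t else πs t with hπt
  obtain ⟨U, hU⟩ := exists_value hγ0 hγ1 M πt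
  have hUle : ∀ t, U t ≤ Vs t := hopt.2 πt U hU
  have hTge : ∀ t, Vs t ≤ M.r t (πt t) + γ * ∑ s'', M.p t (πt t) s'' * Vs s'' := by
    intro t
    by_cases ht : c t
    · simp only [hπt, ht, if_true]; exact le_of_lt ht
    · simp only [hπt, ht, if_false]; exact le_of_eq (hopt.1 t)
  have hge : ∀ t, 0 ≤ U t - Vs t := by
    refine min_nonneg' hγ0 hγ1 (fun s s'' => M.p s (πt s) s'')
      (fun s s'' => M.p_nonneg s (πt s) s'') (fun s => M.p_sum_one s (πt s)) _ ?_
    intro u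
    have h1 := hU u
    have h2 := hTge u
    have h3 : ∑ s'', M.p u (πt u) s'' * (U s'' - Vs s'')
        = ∑ s'', M.p u (πt u) s'' * U s'' - ∑ s'', M.p u (πt u) s'' * Vs s'' := by
      rw [← Finset.sum_sub_distrib]; exact Finset.sum_congr rfl fun s'' _ => by ring
    rw [h3]
    nlinarith
  have hEq : ∀ t, U t = Vs t := fun t => le_antisymm (hUle t) (by linarith [hge t])
  intro t
  by_contra hlt
  push_neg at hlt
  have hct : c t := hlt
  have := hU t
  simp only [hπt, hct, if_true] at this
  rw [hEq t] at this
  have hsum : ∑ s', M.p t (π t) s' * U s' = ∑ s', M.p t (π t) s' * Vs s' :=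
    Finset.sum_congr rfl fun s' _ => by rw [hEq s']
  rw [hsum] at this
  simp only [hc] at hct
  linarith

end Helpers

/-- For any two tasks `θ, θ'` and any state `s`, the suboptimality in `θ'`
of the optimal policy of `θ` satisfies
`|V*_{θ'}(s) − V^{π*_θ}_{θ'}(s)| ≤ 2 max_{π ∈ {π*_θ, π*_{θ'}}} ∑_{s',a'} ν^π_{θ'}(s',a';s) ·
  ( |r_θ(s',a') − r_{θ'}(s',a')| + γ|(p_θ(s',a') − p_{θ'}(s',a'))ᵀ V*_θ| )`.
Here `W` is the value function of `π*_θ` in `θ'`. -/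
theorem value_error_decomposition
    (γ : ℝ) (hγ0 : 0 ≤ γ) (hγ1 : γ < 1)
    (Mθ Mθ' : MDP S A) (πs πs' : S → A) (Vs Vs' : S → ℝ)
    (hopt : IsOptimal Mθ γ πs Vs) (hopt' : IsOptimal Mθ' γ πs' Vs')
    (W : S → ℝ) (hW : IsValue Mθ' γ πs W)
    (ν ν' : S → A → S → ℝ)
    (hν : IsVisit Mθ' γ πs ν) (hν' : IsVisit Mθ' γ πs' ν') (s : S) :
    |Vs' s - W s| ≤
      2 * max
        (∑ s', ∑ a', ν s' a' s *
          (|Mθ.r s' a' - Mθ'.r s' a'| +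
            γ * |∑ s'', (Mθ.p s' a' s'' - Mθ'.p s' a' s'') * Vs s''|))
        (∑ s', ∑ a', ν' s' a' s *
          (|Mθ.r s' a' - Mθ'.r s' a'| +
            γ * |∑ s'', (Mθ.p s' a' s'' - Mθ'.p s' a' s'') * Vs s''|)) := by
  set e : S → A → ℝ := fun s' a' =>
    |Mθ.r s' a' - Mθ'.r s' a'| +
      γ * |∑ s'', (Mθ.p s' a' s'' - Mθ'.p s' a' s'') * Vs s''| with he
  have henn : ∀ s' a', 0 ≤ e s' a' := fun s' a' => by positivity
  set E1 : ℝ := ∑ s', ∑ a', ν s' a' s * e s' a' with hE1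
  set E2 : ℝ := ∑ s', ∑ a', ν' s' a' s * e s' a' with hE2
  -- W ≤ Vs'
  have hWle : W s ≤ Vs' s := hopt'.2 πs W hW s
  -- Step B : Vs - W bound
  have hB : Vs s - W s ≤ ∑ s', ν s' (πs s') s * e s' (πs s') := by
    refine visit_bound hγ0 hγ1 hν (fun t => Vs t - W t) (fun t => e t (πs t))
      (fun t => henn t (πs t)) ?_ s
    intro t
    have h1 := hopt.1 t
    have h2 := hW t
    have hid : ∑ s'', Mθ.p t (πs t) s'' * Vs s'' - ∑ s'', Mθ'.p t (πs t) s'' * W s''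
        = (∑ s'', (Mθ.p t (πs t) s'' - Mθ'.p t (πs t) s'') * Vs s'')
          + ∑ s'', Mθ'.p t (πs t) s'' * (Vs s'' - W s'') := by
      rw [← Finset.sum_add_distrib, ← Finset.sum_sub_distrib]
      exact Finset.sum_congr rfl fun s'' _ => by ring
    have habs1 : Mθ.r t (πs t) - Mθ'.r t (πs t) ≤ |Mθ.r t (πs t) - Mθ'.r t (πs t)| :=
      le_abs_self _
    have habs2 : γ * (∑ s'', (Mθ.p t (πs t) s'' - Mθ'.p t (πs t) s'') * Vs s'')
        ≤ γ * |∑ s'', (Mθ.p t (πs t) s'' - Mθ'.p t (πs t) s'') * Vs s''| :=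
      mul_le_mul_of_nonneg_left (le_abs_self _) hγ0
    simp only [he]
    nlinarith [hid]
  -- Step D : Vs' - Vs bound
  have hD : Vs' s - Vs s ≤ ∑ s', ν' s' (πs' s') s * e s' (πs' s') := by
    refine visit_bound hγ0 hγ1 hν' (fun t => Vs' t - Vs t) (fun t => e t (πs' t))
      (fun t => henn t (πs' t)) ?_ s
    intro t
    have h1 := hopt'.1 t
    have h2 := bellman_opt hγ0 hγ1 hopt πs' t
    have hid : ∑ s'', Mθ'.p t (πs' t) s'' * Vs' s'' - ∑ s'', Mθ.p t (πs' t) s'' * Vs s''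
        = (-∑ s'', (Mθ.p t (πs' t) s'' - Mθ'.p t (πs' t) s'') * Vs s'')
          + ∑ s'', Mθ'.p t (πs' t) s'' * (Vs' s'' - Vs s'') := by
      rw [← Finset.sum_neg_distrib, ← Finset.sum_add_distrib, ← Finset.sum_sub_distrib]
      exact Finset.sum_congr rfl fun s'' _ => by ring
    have habs1 : Mθ'.r t (πs' t) - Mθ.r t (πs' t) ≤ |Mθ.r t (πs' t) - Mθ'.r t (πs' t)| := by
      rw [abs_sub_comm]; exact le_abs_self _
    have habs2 : γ * (-∑ s'', (Mθ.p t (πs' t) s'' - Mθ'.p t (πs' t) s'') * Vs s'')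
        ≤ γ * |∑ s'', (Mθ.p t (πs' t) s'' - Mθ'.p t (πs' t) s'') * Vs s''| :=
      mul_le_mul_of_nonneg_left (neg_le_abs _) hγ0
    simp only [he]
    nlinarith [hid]
  -- Step C : diagonal sums bounded by full sums
  have hνnn := visit_nonneg hγ0 hγ1 hν
  have hν'nn := visit_nonneg hγ0 hγ1 hν'
  have hC1 : ∑ s', ν s' (πs s') s * e s' (πs s') ≤ E1 := by
    refine Finset.sum_le_sum fun s' _ => ?_
    exact Finset.single_le_sum (f := fun a' => ν s' a' s * e s' a')
      (fun a' _ => mul_nonneg (hνnn s' a' s) (henn s' a')) (Finset.mem_univ (πs s'))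
  have hC2 : ∑ s', ν' s' (πs' s') s * e s' (πs' s') ≤ E2 := by
    refine Finset.sum_le_sum fun s' _ => ?_
    exact Finset.single_le_sum (f := fun a' => ν' s' a' s * e s' a')
      (fun a' _ => mul_nonneg (hν'nn s' a' s) (henn s' a')) (Finset.mem_univ (πs' s'))
  rw [abs_of_nonneg (by linarith : (0:ℝ) ≤ Vs' s - W s)]
  have hm1 : E1 ≤ max E1 E2 := le_max_left _ _
  have hm2 : E2 ≤ max E1 E2 := le_max_right _ _
  linarith
end

section
/- Let θ and θ̃ be two tasks over the same finite state set S, action set A and discount γ, with rewards in [0,1], and let Δ ≥ 0. (i) If π is a deterministic stationary policy such that for all s,a: |r_θ(s,a) − r_{θ̃}(s,a)| ≤ Δ and |(p_θ(s,a) − p_{θ̃}(s,a))ᵀ V^π_θ| ≤ Δ, then ‖V^π_θ − V^π_{θ̃}‖_∞ ≤ Δ(1+γ)/(1−γ). (ii) If for all s,a: |r_θ(s,a) − r_{θ̃}(s,a)| ≤ Δ and |(p_θ(s,a) − p_{θ̃}(s,a))ᵀ V*_θ| ≤ Δ, then ‖V*_θ − V*_{θ̃}‖_∞ ≤ Δ(1+γ)/(1−γ).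 -/
variable {S A : Type*} [Fintype S] [Fintype A] [DecidableEq S] [DecidableEq A]

/-- Bellman evaluation operator of policy `π`. -/
def bellmanOp (M : MDP S A) (γ : ℝ) (π : S → A) (W : S → ℝ) : S → ℝ :=
  fun s => M.r s (π s) + γ * ∑ s', M.p s (π s) s' * W s'

lemma prob_sum_le (M : MDP S A) (s : S) (a : A) {f : S → ℝ} {C : ℝ}
    (hf : ∀ s', f s' ≤ C) : ∑ s', M.p s a s' * f s' ≤ C := by
  calc ∑ s', M.p s a s' * f s' ≤ ∑ s', M.p s a s' * C :=
        Finset.sum_le_sum fun s' _ => mul_le_mul_of_nonneg_left (hf s') (M.p_nonneg s a s')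
    _ = C := by rw [← Finset.sum_mul, M.p_sum_one, one_mul]

lemma bellmanOp_sub (M : MDP S A) (γ : ℝ) (π : S → A) (f g : S → ℝ) (s : S) :
    bellmanOp M γ π f s - bellmanOp M γ π g s
      = γ * ∑ s', M.p s (π s) s' * (f s' - g s') := by
  simp only [bellmanOp, Finset.mul_sum, mul_sub]
  rw [Finset.sum_sub_distrib]
  ring

lemma bellmanOp_contracting (M : MDP S A) {γ : ℝ} (hγ0 : 0 ≤ γ) (hγ1 : γ < 1) (π : S → A) :
    ContractingWith ⟨γ, hγ0⟩ (bellmanOp M γ π) := by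
  constructor
  · exact_mod_cast hγ1
  · apply LipschitzWith.of_dist_le_mul
    intro f g
    rw [dist_pi_le_iff (by positivity)]
    intro s
    rw [Real.dist_eq, bellmanOp_sub, abs_mul, abs_of_nonneg hγ0]
    have h1 : |∑ s', M.p s (π s) s' * (f s' - g s')| ≤ dist f g := by
      refine le_trans (Finset.abs_sum_le_sum_abs _ _) ?_
      have : ∀ s', |M.p s (π s) s' * (f s' - g s')| = M.p s (π s) s' * |f s' - g s'| := by
        intro s'; rw [abs_mul, abs_of_nonneg (M.p_nonneg _ _ _)]
      rw [Finset.sum_congr rfl fun s' _ => this s']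
      exact prob_sum_le M s (π s) fun s' => (Real.dist_eq (f s') (g s')) ▸ dist_le_pi_dist f g s'
    calc γ * |∑ s', M.p s (π s) s' * (f s' - g s')| ≤ γ * dist f g :=
          mul_le_mul_of_nonneg_left h1 hγ0
      _ = (⟨γ, hγ0⟩ : NNReal) * dist f g := by norm_num

lemma bellman_ge (M : MDP S A) {γ : ℝ} (hγ0 : 0 ≤ γ) (hγ1 : γ < 1)
    {π : S → A} {V : S → ℝ} (hopt : IsOptimal M γ π V) (s : S) (a : A) :
    M.r s a + γ * ∑ s', M.p s a s' * V s' ≤ V s := by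
  by_contra hlt
  push_neg at hlt
  set π' := Function.update π s a with hπ'
  set T := bellmanOp M γ π' with hT
  have hcon := bellmanOp_contracting M hγ0 hγ1 π'
  have hTVge : ∀ s'', V s'' ≤ T V s'' := by
    intro s''
    by_cases h : s'' = s
    · subst h
      have : T V s'' = M.r s'' a + γ * ∑ s', M.p s'' a s' * V s' := by
        simp [hT, bellmanOp, hπ']
      rw [this]; exact le_of_lt hlt
    · have : T V s'' = M.r s'' (π s'') + γ * ∑ s', M.p s'' (π s'') s' * V s' := by
        simp [hT, bellmanOp, hπ', Function.update_of_ne h]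
      rw [this, ← hopt.1 s'']
  have hTVs : V s < T V s := by
    have : T V s = M.r s a + γ * ∑ s', M.p s a s' * V s' := by
      simp [hT, bellmanOp, hπ']
    rw [this]; exact hlt
  have hmono : ∀ {W W' : S → ℝ}, (∀ t, W t ≤ W' t) → ∀ t, T W t ≤ T W' t := by
    intro W W' hWW t
    simp only [hT, bellmanOp]
    have : ∑ s', M.p t (π' t) s' * W s' ≤ ∑ s', M.p t (π' t) s' * W' s' :=
      Finset.sum_le_sum fun s' _ => mul_le_mul_of_nonneg_left (hWW s') (M.p_nonneg _ _ _)
    nlinarith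
  have hiter : ∀ (W : S → ℝ), (∀ t, W t ≤ T W t) → ∀ n t, W t ≤ T^[n] W t := by
    intro W hW n
    induction n with
    | zero => simp
    | succ n ih =>
      intro t
      rw [Function.iterate_succ_apply']
      exact le_trans (hW t) (hmono ih t)
  set V' := ContractingWith.fixedPoint T hcon with hV'
  have hfix : T V' = V' := hcon.fixedPoint_isFixedPt
  have hval : IsValue M γ π' V' := by
    intro t
    conv_lhs => rw [← hfix]
    rfl
  have hlim : Filter.Tendsto (fun n => T^[n] V s) Filter.atTop (nhds (V' s)) := by
    have := hcon.tendsto_iterate_fixedPoint V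
    exact (tendsto_pi_nhds.mp this) s
  have hge : T V s ≤ V' s := by
    refine ge_of_tendsto hlim ?_
    refine Filter.eventually_atTop.mpr ⟨1, fun n hn => ?_⟩
    obtain ⟨m, rfl⟩ := Nat.exists_eq_add_of_le hn
    rw [add_comm, Function.iterate_add_apply, Function.iterate_one]
    exact hiter (T V) (fun t => hmono hTVge t) m s
  have := hopt.2 π' V' hval s
  linarith

lemma one_sided {γ Δ : ℝ} (hγ0 : 0 ≤ γ) (hγ1 : γ < 1)
    (M' : MDP S A) (a : S → A) (f : S → ℝ)
    (h : ∀ s, f s ≤ Δ * (1 + γ) + γ * ∑ s', M'.p s (a s) s' * f s') :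
    ∀ s, f s ≤ Δ * (1 + γ) / (1 - γ) := by
  intro s
  have hne : (Finset.univ : Finset S).Nonempty := ⟨s, Finset.mem_univ s⟩
  obtain ⟨s0, -, hs0⟩ := Finset.exists_max_image Finset.univ f hne
  have hps := prob_sum_le M' s0 (a s0) (C := f s0) (fun s' => hs0 s' (Finset.mem_univ s'))
  have h1 : f s0 ≤ Δ * (1 + γ) + γ * f s0 := by
    refine le_trans (h s0) ?_
    nlinarith [mul_le_mul_of_nonneg_left hps hγ0]
  have h2 : f s0 ≤ Δ * (1 + γ) / (1 - γ) := by
    rw [le_div_iff₀ (by linarith)]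
    nlinarith
  exact le_trans (hs0 s (Finset.mem_univ s)) h2

lemma sum_decomp (p pt : S → ℝ) (V Vt : S → ℝ) :
    ∑ s', p s' * V s' - ∑ s', pt s' * Vt s'
      = (∑ s', (p s' - pt s') * V s') + ∑ s', pt s' * (V s' - Vt s') := by
  rw [← Finset.sum_add_distrib, ← Finset.sum_sub_distrib]
  exact Finset.sum_congr rfl fun s' _ => by ring

lemma diff_step (Mθ Mθt : MDP S A) {γ Δ : ℝ} (hγ0 : 0 ≤ γ)
    (V Vt : S → ℝ) (s : S) (a : A)
    (hV : V s ≤ Mθ.r s a + γ * ∑ s', Mθ.p s a s' * V s')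
    (hVt : Mθt.r s a + γ * ∑ s', Mθt.p s a s' * Vt s' ≤ Vt s)
    (hr : |Mθ.r s a - Mθt.r s a| ≤ Δ)
    (hp : |∑ s', (Mθ.p s a s' - Mθt.p s a s') * V s'| ≤ Δ) :
    V s - Vt s ≤ Δ * (1 + γ) + γ * ∑ s', Mθt.p s a s' * (V s' - Vt s') := by
  have key := sum_decomp (fun s' => Mθ.p s a s') (fun s' => Mθt.p s a s') V Vt
  have h1 := (abs_le.mp hr).2
  have h2 := (abs_le.mp hp).2
  nlinarith [mul_le_mul_of_nonneg_left h2 hγ0]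

lemma diff_step' (Mθ Mθt : MDP S A) {γ Δ : ℝ} (hγ0 : 0 ≤ γ)
    (V Vt : S → ℝ) (s : S) (a : A)
    (hVt : Vt s ≤ Mθt.r s a + γ * ∑ s', Mθt.p s a s' * Vt s')
    (hV : Mθ.r s a + γ * ∑ s', Mθ.p s a s' * V s' ≤ V s)
    (hr : |Mθ.r s a - Mθt.r s a| ≤ Δ)
    (hp : |∑ s', (Mθ.p s a s' - Mθt.p s a s') * V s'| ≤ Δ) :
    Vt s - V s ≤ Δ * (1 + γ) + γ * ∑ s', Mθt.p s a s' * (Vt s' - V s') := by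
  have key : ∑ s', Mθt.p s a s' * Vt s' - ∑ s', Mθ.p s a s' * V s'
      = (∑ s', (Mθt.p s a s' - Mθ.p s a s') * V s') + ∑ s', Mθt.p s a s' * (Vt s' - V s') := by
    rw [← Finset.sum_add_distrib, ← Finset.sum_sub_distrib]
    exact Finset.sum_congr rfl fun s' _ => by ring
  have hp' : |∑ s', (Mθt.p s a s' - Mθ.p s a s') * V s'| ≤ Δ := by
    rw [show (∑ s', (Mθt.p s a s' - Mθ.p s a s') * V s')
        = -(∑ s', (Mθ.p s a s' - Mθt.p s a s') * V s') by
      rw [← Finset.sum_neg_distrib]; exact Finset.sum_congr rfl fun s' _ => by ring]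
    rwa [abs_neg]
  have h1 := (abs_le.mp hr).1
  have h2 := (abs_le.mp hp').2
  nlinarith [mul_le_mul_of_nonneg_left h2 hγ0]

/-- If the rewards of `θ` and `θ̃` differ by at most `Δ` everywhere and the
transition models differ by at most `Δ` when tested against the relevant value function of `θ`,
then (i) the value functions of any fixed policy `π` in the two tasks, and (ii) the optimal
value functions of the two tasks, differ by at most `Δ(1+γ)/(1−γ)` in sup norm. -/
theorem value_bound_under_model_error
    (γ : ℝ) (hγ0 : 0 ≤ γ) (hγ1 : γ < 1)
    (Mθ Mθt : MDP S A) (Δ : ℝ) (hΔ : 0 ≤ Δ) :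
    -- (i) fixed-policy value functions
    (∀ (π : S → A) (V Vt : S → ℝ), IsValue Mθ γ π V → IsValue Mθt γ π Vt →
      (∀ s a, |Mθ.r s a - Mθt.r s a| ≤ Δ) →
      (∀ s a, |∑ s', (Mθ.p s a s' - Mθt.p s a s') * V s'| ≤ Δ) →
      ∀ s, |V s - Vt s| ≤ Δ * (1 + γ) / (1 - γ)) ∧
    -- (ii) optimal value functions
    (∀ (πs πst : S → A) (V Vt : S → ℝ), IsOptimal Mθ γ πs V → IsOptimal Mθt γ πst Vt →
      (∀ s a, |Mθ.r s a - Mθt.r s a| ≤ Δ) →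
      (∀ s a, |∑ s', (Mθ.p s a s' - Mθt.p s a s') * V s'| ≤ Δ) →
      ∀ s, |V s - Vt s| ≤ Δ * (1 + γ) / (1 - γ)) := by
  constructor
  · intro π V Vt hV hVt hr hp s
    rw [abs_sub_le_iff]
    constructor
    · exact one_sided hγ0 hγ1 Mθt π (fun t => V t - Vt t)
        (fun t => diff_step Mθ Mθt hγ0 V Vt t (π t) (hV t).le (hVt t).ge (hr t (π t)) (hp t (π t))) s
    · exact one_sided hγ0 hγ1 Mθt π (fun t => Vt t - V t)
        (fun t => diff_step' Mθ Mθt hγ0 V Vt t (π t) (hVt t).le (hV t).ge (hr t (π t)) (hp t (π t))) s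
  · intro πs πst V Vt hopt hoptt hr hp s
    rw [abs_sub_le_iff]
    constructor
    · exact one_sided hγ0 hγ1 Mθt πs (fun t => V t - Vt t)
        (fun t => diff_step Mθ Mθt hγ0 V Vt t (πs t) (hopt.1 t).le
          (bellman_ge Mθt hγ0 hγ1 hoptt t (πs t)) (hr t (πs t)) (hp t (πs t))) s
    · exact one_sided hγ0 hγ1 Mθt πst (fun t => Vt t - V t)
        (fun t => diff_step' Mθ Mθt hγ0 V Vt t (πst t) (hoptt.1 t).le
          (bellman_ge Mθ hγ0 hγ1 hopt t (πst t)) (hr t (πst t)) (hp t (πst t))) s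
end

section
/- (Model elimination.) In the PTUM setting, fix θ ∈ Θ, a state-action pair (s,a), and a time t. Define n̄^r_θ(s,a) := min_{θ''∈Θ̄_t} max{ σ̃^r_{θ''}(s,a)² / ([|r̃_{θ*}(s,a) − r̃_θ(s,a)| − 4Δ]_+)², 1 / [|r̃_{θ*}(s,a) − r̃_θ(s,a)| − 4Δ]_+ } and n̄^p_θ(s,a) := min_{θ'∈Θ, θ''∈Θ̄_t} max{ σ̃^p_{θ''}(s,a;θ')² / ([|(p̃_{θ*}(s,a) − p̃_θ(s,a))ᵀṼ*_{θ'}| − 4Δ]_+)², (1/(1−γ)) / [|(p̃_{θ*}(s,a) − p̃_θ(s,a))ᵀṼ*_{θ'}| − 4Δ]_+ }, and n̄_θ(s,a) := 32·log(8SAn(1+|Θ|)/δ)·min{n̄^r_θ(s,a), n̄^p_θ(s,a)}. Then, under the event E, if N_t(s,a) > n̄_θ(s,a) it holds that θ ∉ Θ̄_t. -/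
/-! Statement 10 (Model elimination) — PTUM setting. -/

open Finset

variable {S A Θ : Type*} [Fintype S] [Fintype A] [Fintype Θ]

/-- The data of a run of the PTUM algorithm: parameters `(ε, δ, n)`, model uncertainty `Δ`, the
true MDP models `M` (with optimal policies/values `πstar`, `Vstar` and reward standard
deviations `σr`), the approximate models `Mt` (with optimal policies/values `πt`, `Vt`, values
`Vtpi θ θ'` of `π̃*_θ` in `M̃_{θ'}`, and reward standard deviations `σrt`), the queried
state-action pairs `SA t` at each time `t = 1,…,n`, and the empirical estimates at each time:
mean rewards `rhat`, transition frequencies `phat`, and unbiased empirical standard deviations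
`σrhat` of the reward and `σphat _ _ _ θ'` of `Ṽ*_{θ'}(S')`. -/
structure PTUMRun (S A Θ : Type*) [Fintype S] [Fintype A] [Fintype Θ] where
  γ : ℝ
  ε : ℝ
  δ : ℝ
  Δ : ℝ
  n : ℕ
  θstar : Θ
  M : Θ → MDP S A
  πstar : Θ → S → A
  Vstar : Θ → S → ℝ
  σr : Θ → S → A → ℝ
  Mt : Θ → MDP S A
  πt : Θ → S → A
  Vt : Θ → S → ℝ
  Vtpi : Θ → Θ → S → ℝ
  σrt : Θ → S → A → ℝ
  SA : ℕ → S × A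
  rhat : ℕ → S → A → ℝ
  phat : ℕ → S → A → S → ℝ
  σrhat : ℕ → S → A → ℝ
  σphat : ℕ → S → A → Θ → ℝ

namespace PTUMRun

variable [DecidableEq S] [DecidableEq A] (R : PTUMRun S A Θ)

/-- Number of queries to `(s,a)` made before time `t` (queries happen at times `1, 2, …`). -/
def N (t : ℕ) (s : S) (a : A) : ℕ :=
  ((Finset.Ico 1 t).filter fun t' => R.SA t' = (s, a)).card

/-- True transition/value standard deviation `σ^p_θ(s,a;θ')`: the standard deviation of
`V*_{θ'}(S')` under `p_θ(⋅|s,a)`. -/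
noncomputable def σp (θ : Θ) (s : S) (a : A) (θ' : Θ) : ℝ :=
  Real.sqrt (∑ s', (R.M θ).p s a s' *
    (R.Vstar θ' s' - ∑ s'', (R.M θ).p s a s'' * R.Vstar θ' s'') ^ 2)

/-- Approximate standard deviation `σ̃^p_θ(s,a;θ')`: the standard deviation of `Ṽ*_{θ'}(S')`
under `p̃_θ(⋅|s,a)`. -/
noncomputable def σpt (θ : Θ) (s : S) (a : A) (θ' : Θ) : ℝ :=
  Real.sqrt (∑ s', (R.Mt θ).p s a s' *
    (R.Vt θ' s' - ∑ s'', (R.Mt θ).p s a s'' * R.Vt θ' s'') ^ 2)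

/-- `L = log(8SAn(|Θ|+1)/δ)`. -/
noncomputable def L : ℝ :=
  Real.log (8 * (Fintype.card S) * (Fintype.card A) * R.n * ((Fintype.card Θ) + 1) / R.δ)

/-- `L' = log(4SAn(|Θ|+1)/δ)`. -/
noncomputable def L' : ℝ :=
  Real.log (4 * (Fintype.card S) * (Fintype.card A) * R.n * ((Fintype.card Θ) + 1) / R.δ)

/-- Model `θ` is compatible with the empirical MDP at time `t`: all four deviations are within
their Bernstein confidence intervals. The intervals are `+∞` when `N_t(s,a) ≤ 1`, which is
encoded by requiring the inequalities only when `N_t(s,a) ≥ 2`. -/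
def Compatible (t : ℕ) (θ : Θ) : Prop :=
  ∀ s a, 2 ≤ R.N t s a → ∀ θ' : Θ,
    |R.rhat t s a - (R.Mt θ).r s a| ≤
        Real.sqrt (2 * (R.σrhat t s a) ^ 2 * R.L / (R.N t s a)) +
          7 * R.L / (3 * ((R.N t s a : ℝ) - 1)) + R.Δ ∧
    |∑ s', (R.phat t s a s' - (R.Mt θ).p s a s') * R.Vt θ' s'| ≤
        Real.sqrt (2 * (R.σphat t s a θ') ^ 2 * R.L / (R.N t s a)) +
          7 * R.L / (3 * ((R.N t s a : ℝ) - 1) * (1 - R.γ)) + R.Δ ∧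
    |R.σrhat t s a - R.σrt θ s a| ≤
        Real.sqrt (2 * R.L' / ((R.N t s a : ℝ) - 1)) + R.Δ ∧
    |R.σphat t s a θ' - R.σpt θ s a θ'| ≤
        (1 / (1 - R.γ)) * Real.sqrt (2 * R.L' / ((R.N t s a : ℝ) - 1)) + R.Δ

/-- The confidence set `Θ̄_t`: `Θ̄_0 = Θ` and a model stays active as long as it is compatible
with the empirical MDP at every step. -/
def ΘBar (R : PTUMRun S A Θ) : ℕ → Set Θ
  | 0 => Set.univ
  | t + 1 => {θ ∈ R.ΘBar t | R.Compatible (t + 1) θ}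

/-- The event `E`: the target model is never eliminated during the `n` steps. -/
def EventE : Prop := ∀ t ≤ R.n, R.θstar ∈ R.ΘBar t

/-- Reward gap `Δ̃^r_{s,a}(θ,θ') = [|r̃_θ(s,a) − r̃_{θ'}(s,a)| − 8Δ]₊`. -/
noncomputable def Δgapr (s : S) (a : A) (θ θ' : Θ) : ℝ :=
  max (|(R.Mt θ).r s a - (R.Mt θ').r s a| - 8 * R.Δ) 0

/-- Transition gap `Δ̃^p_{s,a}(θ,θ') = [|(p̃_θ(s,a) − p̃_{θ'}(s,a))ᵀ Ṽ*_θ| − 8Δ]₊`. -/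
noncomputable def Δgapp (s : S) (a : A) (θ θ' : Θ) : ℝ :=
  max (|∑ s', ((R.Mt θ).p s a s' - (R.Mt θ').p s a s') * R.Vt θ s'| - 8 * R.Δ) 0

/-- Reward information for discriminating `θ` and `θ'` using `(s,a)`. -/
noncomputable def Ψr (s : S) (a : A) (θ θ' : Θ) : ℝ :=
  min ((R.Δgapr s a θ θ' / R.σrt θ s a) ^ 2) (R.Δgapr s a θ θ')

/-- Transition information for discriminating `θ` and `θ'` using `(s,a)`. -/
noncomputable def Ψp (s : S) (a : A) (θ θ' : Θ) : ℝ :=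
  min ((R.Δgapp s a θ θ' / R.σpt θ s a θ) ^ 2) ((1 - R.γ) * R.Δgapp s a θ θ')

/-- Total information `Ψ_{s,a}(θ,θ')` for discriminating `θ` and `θ'` using `(s,a)`. -/
noncomputable def Ψ (s : S) (a : A) (θ θ' : Θ) : ℝ := max (R.Ψr s a θ θ') (R.Ψp s a θ θ')

/-- The index `Ψ_t(s,a) = max_{θ,θ' ∈ Θ̄_t} Ψ_{s,a}(θ,θ')` of `(s,a)` at time `t`. -/
noncomputable def index (t : ℕ) (s : S) (a : A) : ℝ :=
  sSup {x | ∃ θ ∈ R.ΘBar t, ∃ θ' ∈ R.ΘBar t, x = R.Ψ s a θ θ'}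

/-- The stopping condition at time `t`: some active model's optimal policy is
`(ε − 2Δ(1+γ)/(1−γ))`-optimal in every active model. -/
def StopCond (t : ℕ) : Prop :=
  ∃ θ ∈ R.ΘBar t, ∀ θ' ∈ R.ΘBar t, ∀ s,
    R.Vt θ' s - R.ε + 2 * R.Δ * (1 + R.γ) / (1 - R.γ) ≤ R.Vtpi θ θ' s

/-- `κ_ε = ε(1−γ)/4 − Δ(1+γ)/2`. -/
noncomputable def κ : ℝ := R.ε * (1 - R.γ) / 4 - R.Δ * (1 + R.γ) / 2

/-- The set `Θ_ε` of models whose optimal policy cannot be guaranteed `ε`-optimal for `θ*`: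
`‖r̃_θ − r̃_{θ*}‖_∞ > κ_ε` or `‖(p̃_θ − p̃_{θ*})ᵀ Ṽ*_{θ*}‖_∞ > κ_ε/γ`. -/
def Θeps : Set Θ :=
  {θ | (∃ s a, R.κ < |(R.Mt θ).r s a - (R.Mt R.θstar).r s a|) ∨
       (∃ s a, R.κ / R.γ <
          |∑ s', ((R.Mt θ).p s a s' - (R.Mt R.θstar).p s a s') * R.Vt R.θstar s'|)}

/-- The standing hypotheses of the PTUM setting: ranges of the parameters, the value functions
are what they claim to be, Assumption 1 (model uncertainty `Δ`), and the query rule (PTUM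
queries a state-action pair maximizing the index). -/
structure Valid : Prop where
  hγ0 : 0 ≤ R.γ
  hγ1 : R.γ < 1
  hε : 0 < R.ε
  hδ0 : 0 < R.δ
  hδ1 : R.δ < 1
  hΔ0 : 0 ≤ R.Δ
  hn : 1 ≤ R.n
  hopt : ∀ θ, IsOptimal (R.M θ) R.γ (R.πstar θ) (R.Vstar θ)
  hopt_t : ∀ θ, IsOptimal (R.Mt θ) R.γ (R.πt θ) (R.Vt θ)
  hval_pi : ∀ θ θ', IsValue (R.Mt θ') R.γ (R.πt θ) (R.Vtpi θ θ')
  hσr0 : ∀ θ s a, 0 ≤ R.σr θ s a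
  hσrt0 : ∀ θ s a, 0 ≤ R.σrt θ s a
  herr_r : ∀ θ s a, |(R.M θ).r s a - (R.Mt θ).r s a| ≤ R.Δ
  herr_p : ∀ θ θ' s a, |∑ s', ((R.M θ).p s a s' - (R.Mt θ).p s a s') * R.Vt θ' s'| ≤ R.Δ
  herr_σr : ∀ θ s a, |R.σr θ s a - R.σrt θ s a| ≤ R.Δ
  herr_σp : ∀ θ θ' s a, |R.σp θ s a θ' - R.σpt θ s a θ'| ≤ R.Δ
  hquery : ∀ t s a, R.index t s a ≤ R.index t (R.SA t).1 (R.SA t).2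

end PTUMRun

open scoped ENNReal
open PTUMRun

namespace PTUMRun
variable {S A Θ : Type*} [Fintype S] [Fintype A] [Fintype Θ] [DecidableEq S] [DecidableEq A]
variable (R : PTUMRun S A Θ)

/-- `n̄^r_θ(s,a)` (valued in `ℝ≥0∞`; division by a zero gap yields `∞`, encoding that `θ`
cannot be eliminated through the rewards of `(s,a)`). -/
noncomputable def nbarR (t : ℕ) (s : S) (a : A) (θ : Θ) : ℝ≥0∞ :=
  ⨅ θ'' ∈ R.ΘBar t,
    max (ENNReal.ofReal ((R.σrt θ'' s a) ^ 2) /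
          ENNReal.ofReal ((max (|(R.Mt R.θstar).r s a - (R.Mt θ).r s a| - 4 * R.Δ) 0) ^ 2))
        (1 / ENNReal.ofReal (max (|(R.Mt R.θstar).r s a - (R.Mt θ).r s a| - 4 * R.Δ) 0))

/-- `n̄^p_θ(s,a)` (valued in `ℝ≥0∞`). -/
noncomputable def nbarP (t : ℕ) (s : S) (a : A) (θ : Θ) : ℝ≥0∞ :=
  ⨅ θ' : Θ, ⨅ θ'' ∈ R.ΘBar t,
    max (ENNReal.ofReal ((R.σpt θ'' s a θ') ^ 2) /
          ENNReal.ofReal ((max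
            (|∑ s', ((R.Mt R.θstar).p s a s' - (R.Mt θ).p s a s') * R.Vt θ' s'| - 4 * R.Δ)
            0) ^ 2))
        (ENNReal.ofReal (1 / (1 - R.γ)) /
          ENNReal.ofReal (max
            (|∑ s', ((R.Mt R.θstar).p s a s' - (R.Mt θ).p s a s') * R.Vt θ' s'| - 4 * R.Δ) 0))

/-- `n̄_θ(s,a) = 32 log(8SAn(1+|Θ|)/δ) · min{n̄^r_θ(s,a), n̄^p_θ(s,a)}`. -/
noncomputable def nbar (t : ℕ) (s : S) (a : A) (θ : Θ) : ℝ≥0∞ :=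
  ENNReal.ofReal (32 * R.L) * min (R.nbarR t s a θ) (R.nbarP t s a θ)

end PTUMRun


/-! ### Auxiliary lemmas for the proof of Statement 10 -/

section AuxArith

private lemma sq_le_imp' {u v : ℝ} (hv : 0 ≤ v) (h : u ^ 2 ≤ v ^ 2) : u ≤ v := by
  nlinarith [sq_nonneg (u - v), sq_nonneg (u + v)]

set_option maxHeartbeats 1000000 in
/-- The core arithmetic contradiction behind model elimination. -/
private lemma elim_core {L L' Δ m G σ'' σh c x y : ℝ}
    (hL : 2 < L) (hL'0 : 0 ≤ L') (hLL : L' ≤ L) (hΔ : 0 ≤ Δ)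
    (hG : 0 < G) (hGc : G ≤ c) (hσ'' : 0 ≤ σ'')
    (hx0 : 0 ≤ x) (hy0 : 0 ≤ y)
    (hx2 : x ^ 2 = 2 * L / m) (hy2 : y ^ 2 = 2 * L' / (m - 1))
    (hm1 : 32 * L * σ'' ^ 2 < m * G ^ 2) (hm2 : 32 * L * c < m * G)
    (hgap : G + 2 * Δ ≤ 2 * x * σh + 14 * L * c / (3 * (m - 1)))
    (hσb : σh ≤ σ'' + c * y + Δ) : False := by
  have hc : 0 < c := hG.trans_le hGc
  have hm32 : 32 * L < m := by nlinarith
  have hmm : (1:ℝ) < m := by nlinarith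
  have hden : 0 < m - 1 := by linarith
  have hm0 : 0 < m := by linarith
  have hx2' : x ^ 2 * m = 2 * L := by field_simp at hx2; linarith
  have hy2' : y ^ 2 * (m - 1) = 2 * L' := by field_simp at hy2; linarith
  have key1 : 4 * x * σ'' ≤ G := by
    refine sq_le_imp' hG.le ?_
    have e : (4 * x * σ'') ^ 2 * m = 16 * σ'' ^ 2 * (x ^ 2 * m) := by ring
    rw [hx2'] at e
    have h16 : (4 * x * σ'') ^ 2 * m ≤ G ^ 2 * m := by linarith
    exact le_of_mul_le_mul_right h16 hm0
  have key2 : 4 * x ≤ 1 := by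
    refine sq_le_imp' zero_le_one ?_
    have e : (4 * x) ^ 2 * m = 16 * (x ^ 2 * m) := by ring
    rw [hx2'] at e
    have h16 : (4 * x) ^ 2 * m ≤ 1 ^ 2 * m := by linarith
    exact le_of_mul_le_mul_right h16 hm0
  have hxm : x ^ 2 * (m - 1) ≤ 2 * L := by nlinarith [sq_nonneg x]
  have key3 : (m - 1) * (x * y) ≤ 2 * L := by
    refine sq_le_imp' (by linarith) ?_
    have e3 : ((m - 1) * (x * y)) ^ 2 = (x ^ 2 * (m - 1)) * (y ^ 2 * (m - 1)) := by ring
    have h3 : (x ^ 2 * (m - 1)) * (y ^ 2 * (m - 1)) ≤ (2 * L) * (2 * L') := by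
      rw [hy2']; exact mul_le_mul_of_nonneg_right hxm (by linarith)
    have h4 : (2 * L) * (2 * L') ≤ (2 * L) ^ 2 := by
      nlinarith [mul_le_mul_of_nonneg_left hLL (show (0:ℝ) ≤ 2 * L by linarith)]
    linarith [e3.le, h3, h4, e3.ge]
  have key4 : (52/3) * L * c < (m - 1) * G := by
    linarith [mul_pos hc (show (0:ℝ) < 44/3 * L - 1 by linarith), hm2, hGc]
  have hgap' : 3 * (m - 1) * (G + 2 * Δ) ≤ 3 * (m - 1) * (2 * x * σh) + 14 * L * c := by
    have h := mul_le_mul_of_nonneg_left hgap (by linarith : (0:ℝ) ≤ 3 * (m - 1))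
    have heq : 3 * (m - 1) * (14 * L * c / (3 * (m - 1))) = 14 * L * c := by field_simp
    have h2 : 3 * (m - 1) * (2 * x * σh + 14 * L * c / (3 * (m - 1))) =
        3 * (m - 1) * (2 * x * σh) + 14 * L * c := by rw [mul_add, heq]
    linarith
  have hA : 6 * (m - 1) * x * σh ≤ 6 * (m - 1) * x * (σ'' + c * y + Δ) :=
    mul_le_mul_of_nonneg_left hσb (mul_nonneg (by linarith) hx0)
  have hB : 6 * (m - 1) * x * σ'' ≤ (3/2) * ((m - 1) * G) := by
    linarith [mul_le_mul_of_nonneg_left key1 hden.le]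
  have hC : 6 * (m - 1) * x * (c * y) ≤ 12 * L * c := by
    linarith [mul_le_mul_of_nonneg_left key3 (by linarith : (0:ℝ) ≤ 6 * c)]
  have hD : 6 * (m - 1) * x * Δ ≤ (3/2) * ((m - 1) * Δ) := by
    linarith [mul_le_mul_of_nonneg_left key2 (mul_nonneg hden.le hΔ)]
  have hmΔ : 0 ≤ (m - 1) * Δ := mul_nonneg hden.le hΔ
  linarith [hgap', hA, hB, hC, hD, key4, hmΔ]

/-- Extraction of the two real inequalities from the `ℝ≥0∞` bound. -/
private lemma ennreal_extract {K u v G m : ℝ} (hK : 0 < K) (hu : 0 ≤ u) (hv : 0 < v)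
    (hG : 0 ≤ G)
    (h : ENNReal.ofReal K * max (ENNReal.ofReal u / ENNReal.ofReal (G ^ 2))
        (ENNReal.ofReal v / ENNReal.ofReal G) < ENNReal.ofReal m) :
    0 < G ∧ K * u < m * G ^ 2 ∧ K * v < m * G := by
  have hKne : ENNReal.ofReal K ≠ 0 := by
    simp only [ne_eq, ENNReal.ofReal_eq_zero, not_le]; exact hK
  have hvne : ENNReal.ofReal v ≠ 0 := by
    simp only [ne_eq, ENNReal.ofReal_eq_zero, not_le]; exact hv
  have hGpos : 0 < G := by
    by_contra hng
    have hG0 : G = 0 := le_antisymm (not_lt.mp hng) hG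
    rw [hG0] at h
    have hdiv : ENNReal.ofReal v / ENNReal.ofReal (0:ℝ) = ⊤ := by
      rw [ENNReal.ofReal_zero]; exact ENNReal.div_zero hvne
    rw [hdiv, max_eq_right le_top, ENNReal.mul_top hKne] at h
    exact absurd h (by simp)
  refine ⟨hGpos, ?_, ?_⟩
  · have h1 : ENNReal.ofReal K * (ENNReal.ofReal u / ENNReal.ofReal (G ^ 2)) <
        ENNReal.ofReal m := lt_of_le_of_lt (mul_le_mul_right (le_max_left _ _) _) h
    rw [← ENNReal.ofReal_div_of_pos (by positivity), ← ENNReal.ofReal_mul hK.le] at h1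
    have h2 : K * (u / G ^ 2) < m :=
      (ENNReal.ofReal_lt_ofReal_iff_of_nonneg
        (mul_nonneg hK.le (div_nonneg hu (sq_nonneg G)))).mp h1
    rw [← mul_div_assoc] at h2
    exact (div_lt_iff₀ (by positivity)).mp h2
  · have h1 : ENNReal.ofReal K * (ENNReal.ofReal v / ENNReal.ofReal G) <
        ENNReal.ofReal m := lt_of_le_of_lt (mul_le_mul_right (le_max_right _ _) _) h
    rw [← ENNReal.ofReal_div_of_pos hGpos, ← ENNReal.ofReal_mul hK.le] at h1
    have h2 : K * (v / G) < m :=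
      (ENNReal.ofReal_lt_ofReal_iff_of_nonneg
        (mul_nonneg hK.le (div_nonneg hv.le hGpos.le))).mp h1
    rw [← mul_div_assoc] at h2
    exact (div_lt_iff₀ hGpos).mp h2

end AuxArith

section AuxMDP

variable {S A Θ : Type*} [Fintype S] [Fintype A] [Fintype Θ]

/-- Any value function of an MDP with rewards in `[0,1]` takes values in `[0, 1/(1-γ)]`. -/
private lemma isValue_bounds [Nonempty S] (M : MDP S A) {γ : ℝ} (hγ0 : 0 ≤ γ) (hγ1 : γ < 1)
    {π : S → A} {V : S → ℝ} (h : IsValue M γ π V) :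
    ∀ s, 0 ≤ V s ∧ V s ≤ 1 / (1 - γ) := by
  have h1γ : 0 < 1 - γ := by linarith
  obtain ⟨s₀, -, hs₀⟩ := Finset.exists_max_image Finset.univ V
    ⟨Classical.arbitrary S, Finset.mem_univ _⟩
  obtain ⟨s₁, -, hs₁⟩ := Finset.exists_min_image Finset.univ V
    ⟨Classical.arbitrary S, Finset.mem_univ _⟩
  have hmax : V s₀ ≤ 1 / (1 - γ) := by
    have hb := h s₀
    have hsum : ∑ s', M.p s₀ (π s₀) s' * V s' ≤ V s₀ := by
      calc ∑ s', M.p s₀ (π s₀) s' * V s' ≤ ∑ s', M.p s₀ (π s₀) s' * V s₀ :=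
            Finset.sum_le_sum fun i _ =>
              mul_le_mul_of_nonneg_left (hs₀ i (Finset.mem_univ i)) (M.p_nonneg _ _ _)
        _ = V s₀ := by rw [← Finset.sum_mul, M.p_sum_one, one_mul]
    have hr := M.r_le_one s₀ (π s₀)
    rw [le_div_iff₀ h1γ]
    nlinarith [mul_le_mul_of_nonneg_left hsum hγ0]
  have hmin : 0 ≤ V s₁ := by
    have hb := h s₁
    have hsum : V s₁ ≤ ∑ s', M.p s₁ (π s₁) s' * V s' := by
      calc V s₁ = ∑ s', M.p s₁ (π s₁) s' * V s₁ := by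
            rw [← Finset.sum_mul, M.p_sum_one, one_mul]
        _ ≤ _ := Finset.sum_le_sum fun i _ =>
              mul_le_mul_of_nonneg_left (hs₁ i (Finset.mem_univ i)) (M.p_nonneg _ _ _)
    have hr := M.r_nonneg s₁ (π s₁)
    nlinarith [mul_le_mul_of_nonneg_left hsum hγ0]
  exact fun s => ⟨le_trans hmin (hs₁ s (Finset.mem_univ s)),
    le_trans (hs₀ s (Finset.mem_univ s)) hmax⟩

variable [DecidableEq S] [DecidableEq A] (R : PTUMRun S A Θ)

private lemma compatible_of_mem_ΘBar {t : ℕ} (ht : 1 ≤ t) {θ : Θ} (h : θ ∈ R.ΘBar t) :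
    R.Compatible t θ := by
  cases t with
  | zero => omega
  | succ t => exact h.2

private lemma L_facts [Nonempty S] [Nonempty A] (hδ0 : 0 < R.δ) (hδ1 : R.δ < 1)
    (hn : 1 ≤ R.n) : 2 < R.L ∧ 0 ≤ R.L' ∧ R.L' ≤ R.L := by
  have hS1 : (1:ℝ) ≤ (Fintype.card S : ℝ) := Nat.one_le_cast.mpr Fintype.card_pos
  have hA1 : (1:ℝ) ≤ (Fintype.card A : ℝ) := Nat.one_le_cast.mpr Fintype.card_pos
  have hΘ0 : (0:ℝ) ≤ (Fintype.card Θ : ℝ) := Nat.cast_nonneg _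
  have hn1 : (1:ℝ) ≤ (R.n : ℝ) := Nat.one_le_cast.mpr hn
  unfold PTUMRun.L PTUMRun.L'
  have p1 : (1:ℝ) ≤ (Fintype.card S : ℝ) * (Fintype.card A : ℝ) := by nlinarith
  have p2 : (1:ℝ) ≤ (Fintype.card S : ℝ) * (Fintype.card A : ℝ) * (R.n : ℝ) := by nlinarith
  have hX1 : (1:ℝ) ≤ (Fintype.card S : ℝ) * (Fintype.card A : ℝ) * (R.n : ℝ) *
      ((Fintype.card Θ : ℝ) + 1) := by nlinarith
  have harg8 : (8:ℝ) ≤ 8 * (Fintype.card S : ℝ) * (Fintype.card A : ℝ) * (R.n : ℝ) *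
      ((Fintype.card Θ : ℝ) + 1) / R.δ := by
    rw [le_div_iff₀ hδ0]; nlinarith
  have harg4 : (4:ℝ) ≤ 4 * (Fintype.card S : ℝ) * (Fintype.card A : ℝ) * (R.n : ℝ) *
      ((Fintype.card Θ : ℝ) + 1) / R.δ := by
    rw [le_div_iff₀ hδ0]; nlinarith
  have hle : 4 * (Fintype.card S : ℝ) * (Fintype.card A : ℝ) * (R.n : ℝ) *
      ((Fintype.card Θ : ℝ) + 1) / R.δ ≤
      8 * (Fintype.card S : ℝ) * (Fintype.card A : ℝ) * (R.n : ℝ) *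
      ((Fintype.card Θ : ℝ) + 1) / R.δ :=
    (div_le_div_iff_of_pos_right hδ0).mpr (by nlinarith)
  have h8 : (2:ℝ) < Real.log 8 := by
    have h3 : Real.log 8 = 3 * Real.log 2 := by
      rw [show (8:ℝ) = 2 ^ (3:ℕ) by norm_num, Real.log_pow]; norm_num
    rw [h3]; nlinarith [Real.log_two_gt_d9]
  exact ⟨lt_of_lt_of_le h8 (Real.log_le_log (by norm_num) harg8),
    Real.log_nonneg (by linarith),
    Real.log_le_log (by linarith) hle⟩

end AuxMDP

set_option maxHeartbeats 1000000 in
/-- **Model elimination.** Under the event `E`, if the number of queries to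
`(s,a)` before time `t` exceeds `n̄_θ(s,a)`, then `θ` is not in the confidence set `Θ̄_t`. -/
theorem model_elimination
    {S A Θ : Type*} [Fintype S] [Fintype A] [Fintype Θ] [DecidableEq S] [DecidableEq A]
    (R : PTUMRun S A Θ) (hvalid : R.Valid) (hE : R.EventE)
    (θ : Θ) (s : S) (a : A) (t : ℕ) (ht : t ≤ R.n)
    (hN : R.nbar t s a θ < (R.N t s a : ℝ≥0∞)) :
    θ ∉ R.ΘBar t := by
  intro hθ
  -- `t = 0` is impossible: then `N_t(s,a) = 0` and nothing is below `n̄`.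
  rcases Nat.eq_zero_or_pos t with rfl | ht1
  · have h0 : R.N 0 s a = 0 := by
      rw [PTUMRun.N, Finset.Ico_eq_empty (by omega), Finset.filter_empty, Finset.card_empty]
    rw [h0] at hN
    simp at hN
  obtain ⟨hγ0, hγ1, hε, hδ0, hδ1, hΔ0, hn, hopt, hopt_t, hval_pi, hσr0, hσrt0,
    herr_r, herr_p, herr_σr, herr_σp, hquery⟩ := hvalid
  haveI : Nonempty S := ⟨s⟩
  haveI : Nonempty A := ⟨a⟩
  obtain ⟨hL, hL'0, hLL⟩ := L_facts R hδ0 hδ1 hn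
  have h1γ : 0 < 1 - R.γ := by linarith
  have hK0 : (0:ℝ) < 32 * R.L := by linarith
  have hKne : ENNReal.ofReal (32 * R.L) ≠ 0 := by
    simp only [ne_eq, ENNReal.ofReal_eq_zero, not_le]; exact hK0
  have hKtop : ENNReal.ofReal (32 * R.L) ≠ ⊤ := ENNReal.ofReal_ne_top
  have hm0 : (0:ℝ) ≤ (R.N t s a : ℝ) := Nat.cast_nonneg _
  rw [PTUMRun.nbar] at hN
  rcases le_total (R.nbarR t s a θ) (R.nbarP t s a θ) with hmin | hmin
  -- ==================== reward case ====================
  · rw [min_eq_left hmin, PTUMRun.nbarR] at hN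
    have h1 : (⨅ θ'' ∈ R.ΘBar t,
        max (ENNReal.ofReal ((R.σrt θ'' s a) ^ 2) /
          ENNReal.ofReal ((max (|(R.Mt R.θstar).r s a - (R.Mt θ).r s a| - 4 * R.Δ) 0) ^ 2))
        (1 / ENNReal.ofReal (max (|(R.Mt R.θstar).r s a - (R.Mt θ).r s a| - 4 * R.Δ) 0)))
        < (R.N t s a : ℝ≥0∞) / ENNReal.ofReal (32 * R.L) :=
      (ENNReal.lt_div_iff_mul_lt (Or.inl hKne) (Or.inl hKtop)).mpr (by rwa [mul_comm] at hN)
    obtain ⟨θ'', hlt⟩ := iInf_lt_iff.mp h1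
    obtain ⟨hθ''mem, hlt⟩ := iInf_lt_iff.mp hlt
    have hKey : ENNReal.ofReal (32 * R.L) *
        max (ENNReal.ofReal ((R.σrt θ'' s a) ^ 2) /
          ENNReal.ofReal ((max (|(R.Mt R.θstar).r s a - (R.Mt θ).r s a| - 4 * R.Δ) 0) ^ 2))
        (ENNReal.ofReal 1 /
          ENNReal.ofReal (max (|(R.Mt R.θstar).r s a - (R.Mt θ).r s a| - 4 * R.Δ) 0))
        < ENNReal.ofReal ((R.N t s a : ℝ)) := by
      rw [ENNReal.ofReal_one, ENNReal.ofReal_natCast]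
      have := (ENNReal.lt_div_iff_mul_lt (Or.inl hKne) (Or.inl hKtop)).mp hlt
      rwa [mul_comm] at this
    obtain ⟨hGpos, hm1, hm2⟩ :=
      ennreal_extract hK0 (sq_nonneg _) one_pos (le_max_right _ _) hKey
    -- positive gap
    have hd4 : 0 < |(R.Mt R.θstar).r s a - (R.Mt θ).r s a| - 4 * R.Δ := by
      rcases lt_or_ge 0 (|(R.Mt R.θstar).r s a - (R.Mt θ).r s a| - 4 * R.Δ) with h | h
      · exact h
      · rw [max_eq_right h] at hGpos; exact absurd hGpos (lt_irrefl 0)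
    have hGr : max (|(R.Mt R.θstar).r s a - (R.Mt θ).r s a| - 4 * R.Δ) 0
        = |(R.Mt R.θstar).r s a - (R.Mt θ).r s a| - 4 * R.Δ := max_eq_left hd4.le
    rw [hGr] at hm1 hm2
    -- the reward gap is at most 1
    have hd1 : |(R.Mt R.θstar).r s a - (R.Mt θ).r s a| ≤ 1 :=
      abs_le.mpr ⟨by linarith [(R.Mt R.θstar).r_nonneg s a, (R.Mt θ).r_le_one s a],
        by linarith [(R.Mt R.θstar).r_le_one s a, (R.Mt θ).r_nonneg s a]⟩
    have hGc : |(R.Mt R.θstar).r s a - (R.Mt θ).r s a| - 4 * R.Δ ≤ 1 := by linarith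
    -- enough samples
    have hm32 : 32 * R.L < (R.N t s a : ℝ) := by
      nlinarith [mul_le_mul_of_nonneg_left hGc hm0]
    have hN2 : 2 ≤ R.N t s a := by
      have h2 : (2:ℝ) ≤ (R.N t s a : ℝ) := by linarith
      exact_mod_cast h2
    have hNd : (0:ℝ) < (R.N t s a : ℝ) - 1 := by
      have h2 : (2:ℝ) ≤ (R.N t s a : ℝ) := by linarith
      linarith
    -- compatibility
    have hcθ := (compatible_of_mem_ΘBar R ht1 hθ s a hN2 R.θstar).1
    have hcs := (compatible_of_mem_ΘBar R ht1 (hE t ht) s a hN2 R.θstar).1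
    have hcσ := (compatible_of_mem_ΘBar R ht1 hθ''mem s a hN2 R.θstar).2.2.1
    have hsq : Real.sqrt (2 * (R.σrhat t s a) ^ 2 * R.L / (R.N t s a)) =
        |R.σrhat t s a| * Real.sqrt (2 * R.L / (R.N t s a : ℝ)) := by
      rw [show 2 * (R.σrhat t s a) ^ 2 * R.L / ((R.N t s a : ℕ) : ℝ) =
          (R.σrhat t s a) ^ 2 * (2 * R.L / ((R.N t s a : ℕ) : ℝ)) by ring,
        Real.sqrt_mul (sq_nonneg _), Real.sqrt_sq_eq_abs]
    rw [hsq] at hcθ hcs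
    -- triangle inequality for the gap
    have htri := abs_sub_le ((R.Mt R.θstar).r s a) (R.rhat t s a) ((R.Mt θ).r s a)
    have habs : |(R.Mt R.θstar).r s a - R.rhat t s a|
        = |R.rhat t s a - (R.Mt R.θstar).r s a| := abs_sub_comm _ _
    have hgap : (|(R.Mt R.θstar).r s a - (R.Mt θ).r s a| - 4 * R.Δ) + 2 * R.Δ ≤
        2 * Real.sqrt (2 * R.L / (R.N t s a : ℝ)) * |R.σrhat t s a| +
          14 * R.L * 1 / (3 * ((R.N t s a : ℝ) - 1)) := by
      have h7 : (0:ℝ) ≤ 7 * R.L / (3 * ((R.N t s a : ℝ) - 1)) :=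
        div_nonneg (by linarith) (by linarith)
      rw [mul_one, show 14 * R.L / (3 * ((R.N t s a : ℝ) - 1)) =
        2 * (7 * R.L / (3 * ((R.N t s a : ℝ) - 1))) by ring]
      linarith [htri, hcθ, hcs, habs.le, habs.ge, h7]
    -- bound on the empirical standard deviation
    have hσb : |R.σrhat t s a| ≤ R.σrt θ'' s a +
        1 * Real.sqrt (2 * R.L' / ((R.N t s a : ℝ) - 1)) + R.Δ := by
      have h1 := abs_sub_abs_le_abs_sub (R.σrhat t s a) (R.σrt θ'' s a)
      have h2 : |R.σrt θ'' s a| = R.σrt θ'' s a := abs_of_nonneg (hσrt0 _ _ _)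
      linarith [hcσ]
    exact elim_core hL hL'0 hLL hΔ0 hd4 hGc (hσrt0 _ _ _)
      (Real.sqrt_nonneg _) (Real.sqrt_nonneg _)
      (Real.sq_sqrt (div_nonneg (by linarith) hm0))
      (Real.sq_sqrt (div_nonneg (by linarith) (by linarith : (0:ℝ) ≤ (R.N t s a : ℝ) - 1)))
      hm1 hm2 hgap hσb
  -- ==================== transition case ====================
  · rw [min_eq_right hmin, PTUMRun.nbarP] at hN
    have h1 : (⨅ θ' : Θ, ⨅ θ'' ∈ R.ΘBar t,
        max (ENNReal.ofReal ((R.σpt θ'' s a θ') ^ 2) /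
          ENNReal.ofReal ((max
            (|∑ s', ((R.Mt R.θstar).p s a s' - (R.Mt θ).p s a s') * R.Vt θ' s'| - 4 * R.Δ)
            0) ^ 2))
        (ENNReal.ofReal (1 / (1 - R.γ)) /
          ENNReal.ofReal (max
            (|∑ s', ((R.Mt R.θstar).p s a s' - (R.Mt θ).p s a s') * R.Vt θ' s'| - 4 * R.Δ)
            0)))
        < (R.N t s a : ℝ≥0∞) / ENNReal.ofReal (32 * R.L) :=
      (ENNReal.lt_div_iff_mul_lt (Or.inl hKne) (Or.inl hKtop)).mpr (by rwa [mul_comm] at hN)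
    obtain ⟨θ', hlt⟩ := iInf_lt_iff.mp h1
    obtain ⟨θ'', hlt⟩ := iInf_lt_iff.mp hlt
    obtain ⟨hθ''mem, hlt⟩ := iInf_lt_iff.mp hlt
    have hKey : ENNReal.ofReal (32 * R.L) *
        max (ENNReal.ofReal ((R.σpt θ'' s a θ') ^ 2) /
          ENNReal.ofReal ((max
            (|∑ s', ((R.Mt R.θstar).p s a s' - (R.Mt θ).p s a s') * R.Vt θ' s'| - 4 * R.Δ)
            0) ^ 2))
        (ENNReal.ofReal (1 / (1 - R.γ)) /
          ENNReal.ofReal (max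
            (|∑ s', ((R.Mt R.θstar).p s a s' - (R.Mt θ).p s a s') * R.Vt θ' s'| - 4 * R.Δ)
            0))
        < ENNReal.ofReal ((R.N t s a : ℝ)) := by
      rw [ENNReal.ofReal_natCast]
      have := (ENNReal.lt_div_iff_mul_lt (Or.inl hKne) (Or.inl hKtop)).mp hlt
      rwa [mul_comm] at this
    obtain ⟨hGpos, hm1, hm2⟩ :=
      ennreal_extract hK0 (sq_nonneg _) (by positivity) (le_max_right _ _) hKey
    -- positive gap
    have hd4 : 0 < |∑ s', ((R.Mt R.θstar).p s a s' - (R.Mt θ).p s a s') * R.Vt θ' s'|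
        - 4 * R.Δ := by
      rcases lt_or_ge 0 (|∑ s', ((R.Mt R.θstar).p s a s' - (R.Mt θ).p s a s') * R.Vt θ' s'|
          - 4 * R.Δ) with h | h
      · exact h
      · rw [max_eq_right h] at hGpos; exact absurd hGpos (lt_irrefl 0)
    have hGr : max (|∑ s', ((R.Mt R.θstar).p s a s' - (R.Mt θ).p s a s') * R.Vt θ' s'|
          - 4 * R.Δ) 0
        = |∑ s', ((R.Mt R.θstar).p s a s' - (R.Mt θ).p s a s') * R.Vt θ' s'| - 4 * R.Δ :=
      max_eq_left hd4.le
    rw [hGr] at hm1 hm2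
    -- value function bounds
    have hVb := isValue_bounds (R.Mt θ') hγ0 hγ1 (hopt_t θ').1
    have hsum1 : ∀ θ₀ : Θ, 0 ≤ (∑ s', (R.Mt θ₀).p s a s' * R.Vt θ' s') ∧
        (∑ s', (R.Mt θ₀).p s a s' * R.Vt θ' s') ≤ 1 / (1 - R.γ) := by
      intro θ₀
      constructor
      · exact Finset.sum_nonneg fun i _ => mul_nonneg ((R.Mt θ₀).p_nonneg s a i) (hVb i).1
      · calc (∑ s', (R.Mt θ₀).p s a s' * R.Vt θ' s')
            ≤ ∑ s', (R.Mt θ₀).p s a s' * (1 / (1 - R.γ)) :=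
              Finset.sum_le_sum fun i _ =>
                mul_le_mul_of_nonneg_left (hVb i).2 ((R.Mt θ₀).p_nonneg s a i)
          _ = 1 / (1 - R.γ) := by rw [← Finset.sum_mul, (R.Mt θ₀).p_sum_one, one_mul]
    have hsplit : (∑ s', ((R.Mt R.θstar).p s a s' - (R.Mt θ).p s a s') * R.Vt θ' s')
        = (∑ s', (R.Mt R.θstar).p s a s' * R.Vt θ' s')
          - (∑ s', (R.Mt θ).p s a s' * R.Vt θ' s') := by
      rw [← Finset.sum_sub_distrib]
      exact Finset.sum_congr rfl fun i _ => by ring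
    have hdp : |∑ s', ((R.Mt R.θstar).p s a s' - (R.Mt θ).p s a s') * R.Vt θ' s'|
        ≤ 1 / (1 - R.γ) := by
      rw [hsplit]
      exact abs_le.mpr ⟨by linarith [(hsum1 R.θstar).1, (hsum1 θ).2],
        by linarith [(hsum1 R.θstar).2, (hsum1 θ).1]⟩
    have hGc : |∑ s', ((R.Mt R.θstar).p s a s' - (R.Mt θ).p s a s') * R.Vt θ' s'|
        - 4 * R.Δ ≤ 1 / (1 - R.γ) := by linarith
    -- enough samples
    have hm32 : 32 * R.L < (R.N t s a : ℝ) := by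
      nlinarith [mul_le_mul_of_nonneg_left hGc hm0, hm2,
        one_div_pos.mpr h1γ]
    have hN2 : 2 ≤ R.N t s a := by
      have h2 : (2:ℝ) ≤ (R.N t s a : ℝ) := by linarith
      exact_mod_cast h2
    -- compatibility
    have hcθ := (compatible_of_mem_ΘBar R ht1 hθ s a hN2 θ').2.1
    have hcs := (compatible_of_mem_ΘBar R ht1 (hE t ht) s a hN2 θ').2.1
    have hcσ := (compatible_of_mem_ΘBar R ht1 hθ''mem s a hN2 θ').2.2.2
    have hsq : Real.sqrt (2 * (R.σphat t s a θ') ^ 2 * R.L / (R.N t s a)) =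
        |R.σphat t s a θ'| * Real.sqrt (2 * R.L / (R.N t s a : ℝ)) := by
      rw [show 2 * (R.σphat t s a θ') ^ 2 * R.L / ((R.N t s a : ℕ) : ℝ) =
          (R.σphat t s a θ') ^ 2 * (2 * R.L / ((R.N t s a : ℕ) : ℝ)) by ring,
        Real.sqrt_mul (sq_nonneg _), Real.sqrt_sq_eq_abs]
    rw [hsq] at hcθ hcs
    -- triangle inequality for the gap
    have hsplit2 : (∑ s', ((R.Mt R.θstar).p s a s' - (R.Mt θ).p s a s') * R.Vt θ' s')
        = (∑ s', (R.phat t s a s' - (R.Mt θ).p s a s') * R.Vt θ' s')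
          - (∑ s', (R.phat t s a s' - (R.Mt R.θstar).p s a s') * R.Vt θ' s') := by
      rw [← Finset.sum_sub_distrib]
      exact Finset.sum_congr rfl fun i _ => by ring
    have htri : |∑ s', ((R.Mt R.θstar).p s a s' - (R.Mt θ).p s a s') * R.Vt θ' s'|
        ≤ |∑ s', (R.phat t s a s' - (R.Mt θ).p s a s') * R.Vt θ' s'| +
          |∑ s', (R.phat t s a s' - (R.Mt R.θstar).p s a s') * R.Vt θ' s'| := by
      rw [hsplit2]; exact abs_sub _ _
    have hNd : (0:ℝ) < (R.N t s a : ℝ) - 1 := by linarith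
    have e7 : 7 * R.L / (3 * ((R.N t s a : ℝ) - 1) * (1 - R.γ)) =
        7 * R.L * (1 / (1 - R.γ)) / (3 * ((R.N t s a : ℝ) - 1)) := by
      rw [mul_one_div, div_div, mul_comm (1 - R.γ) (3 * ((R.N t s a : ℝ) - 1))]
    have hgap : (|∑ s', ((R.Mt R.θstar).p s a s' - (R.Mt θ).p s a s') * R.Vt θ' s'|
          - 4 * R.Δ) + 2 * R.Δ ≤
        2 * Real.sqrt (2 * R.L / (R.N t s a : ℝ)) * |R.σphat t s a θ'| +
          14 * R.L * (1 / (1 - R.γ)) / (3 * ((R.N t s a : ℝ) - 1)) := by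
      rw [e7] at hcθ hcs
      have h7 : (0:ℝ) ≤ 7 * R.L * (1 / (1 - R.γ)) / (3 * ((R.N t s a : ℝ) - 1)) :=
        div_nonneg (mul_nonneg (by linarith) (one_div_pos.mpr h1γ).le) (by linarith)
      rw [show 14 * R.L * (1 / (1 - R.γ)) / (3 * ((R.N t s a : ℝ) - 1)) =
        2 * (7 * R.L * (1 / (1 - R.γ)) / (3 * ((R.N t s a : ℝ) - 1))) by ring]
      linarith [htri, hcθ, hcs, h7]
    -- bound on the empirical standard deviation
    have hσpt0 : 0 ≤ R.σpt θ'' s a θ' := by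
      rw [PTUMRun.σpt]; exact Real.sqrt_nonneg _
    have hσb : |R.σphat t s a θ'| ≤ R.σpt θ'' s a θ' +
        (1 / (1 - R.γ)) * Real.sqrt (2 * R.L' / ((R.N t s a : ℝ) - 1)) + R.Δ := by
      have h1 := abs_sub_abs_le_abs_sub (R.σphat t s a θ') (R.σpt θ'' s a θ')
      have h2 : |R.σpt θ'' s a θ'| = R.σpt θ'' s a θ' := abs_of_nonneg hσpt0
      linarith [hcσ]
    exact elim_core hL hL'0 hLL hΔ0 hd4 hGc hσpt0
      (Real.sqrt_nonneg _) (Real.sqrt_nonneg _)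
      (Real.sq_sqrt (div_nonneg (by linarith) hm0))
      (Real.sq_sqrt (div_nonneg (by linarith) hNd.le))
      hm1 hm2 hgap hσb
end

section
/- (Stopping condition.) In the PTUM setting, let τ be the stopping time of the algorithm, κ_ε := ε(1−γ)/4 − Δ(1+γ)/2, and Θ_ε := {θ ∈ Θ : ‖r̃_θ − r̃_{θ*}‖_∞ > κ_ε or ‖(p̃_θ − p̃_{θ*})ᵀṼ*_{θ*}‖_∞ > κ_ε/γ}. Then, under the event E, for every t < τ there exists at least one model θ ∈ Θ_ε with θ ∈ Θ̄_t. -/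
/-! Statement 11 (Stopping condition) — PTUM setting. -/

open Finset

variable {S A Θ : Type*} [Fintype S] [Fintype A] [Fintype Θ]

section AuxPTUM

lemma exists_isValue {T B : Type*} [Fintype T] [Fintype B]
    (M : MDP T B) (γ : ℝ) (hγ0 : 0 ≤ γ) (hγ1 : γ < 1) (π : T → B) :
    ∃ V : T → ℝ, IsValue M γ π V := by
  set F : (T → ℝ) → (T → ℝ) :=
    fun V s => M.r s (π s) + γ * ∑ s', M.p s (π s) s' * V s' with hF
  have hK : ContractingWith ⟨γ, hγ0⟩ F := by
    constructor
    · exact_mod_cast hγ1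
    · apply LipschitzWith.of_dist_le_mul
      intro V V'
      show dist (F V) (F V') ≤ γ * dist V V'
      refine (dist_pi_le_iff (by positivity)).2 fun s => ?_
      rw [Real.dist_eq]
      have hsub : F V s - F V' s = γ * ∑ s', M.p s (π s) s' * (V s' - V' s') := by
        simp only [hF, mul_sub, Finset.sum_sub_distrib]
        ring
      rw [hsub, abs_mul, abs_of_nonneg hγ0]
      refine mul_le_mul_of_nonneg_left ?_ hγ0
      calc |∑ s', M.p s (π s) s' * (V s' - V' s')|
          ≤ ∑ s', |M.p s (π s) s' * (V s' - V' s')| := Finset.abs_sum_le_sum_abs _ _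
        _ ≤ ∑ s', M.p s (π s) s' * dist V V' := by
            refine Finset.sum_le_sum fun s' _ => ?_
            rw [abs_mul, abs_of_nonneg (M.p_nonneg s (π s) s')]
            refine mul_le_mul_of_nonneg_left ?_ (M.p_nonneg s (π s) s')
            rw [← Real.dist_eq]
            exact dist_le_pi_dist V V' s'
        _ = dist V V' := by rw [← Finset.sum_mul, M.p_sum_one, one_mul]
  refine ⟨ContractingWith.fixedPoint F hK, fun s => ?_⟩
  exact (congrFun (hK.fixedPoint_isFixedPt) s).symm

lemma sum_prob_le {T : Type*} [Fintype T] (q W : T → ℝ) (hq0 : ∀ x, 0 ≤ q x)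
    (hq1 : ∑ x, q x = 1) (s0 : T) (hmax : ∀ x, W x ≤ W s0) :
    ∑ x, q x * W x ≤ W s0 := by
  calc ∑ x, q x * W x ≤ ∑ x, q x * W s0 :=
        Finset.sum_le_sum fun x _ => mul_le_mul_of_nonneg_left (hmax x) (hq0 x)
    _ = W s0 := by rw [← Finset.sum_mul, hq1, one_mul]

lemma max_rec_bound {T : Type*} [Fintype T] [Nonempty T] {γ c : ℝ}
    (hγ1 : γ < 1) (W : T → ℝ)
    (h : ∀ s0 : T, (∀ x, W x ≤ W s0) → W s0 ≤ c + γ * W s0) :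
    ∀ x, W x ≤ c / (1 - γ) := by
  obtain ⟨s0, -, hs0⟩ := Finset.exists_max_image Finset.univ W
    ⟨Classical.arbitrary T, Finset.mem_univ _⟩
  have hmax : ∀ x, W x ≤ W s0 := fun x => hs0 x (Finset.mem_univ x)
  have h0 := h s0 hmax
  intro x
  rw [le_div_iff₀ (by linarith)]
  nlinarith [hmax x]

lemma isOptimal_ge {T B : Type*} [Fintype T] [Fintype B]
    {M : MDP T B} {γ : ℝ} (hγ0 : 0 ≤ γ) (hγ1 : γ < 1) {π : T → B} {V : T → ℝ}
    (h : IsOptimal M γ π V) (s : T) (a : B) :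
    M.r s a + γ * ∑ s', M.p s a s' * V s' ≤ V s := by
  classical
  by_contra hlt
  push_neg at hlt
  set π' : T → B := fun s' => if s' = s then a else π s' with hπ'
  obtain ⟨V', hV'⟩ := exists_isValue M γ hγ0 hγ1 π'
  have hle : ∀ x, V x ≤ V' x := by
    haveI : Nonempty T := ⟨s⟩
    obtain ⟨s0, -, hs0⟩ := Finset.exists_max_image Finset.univ (fun x => V x - V' x)
      ⟨s, Finset.mem_univ _⟩
    have hmax : ∀ x, V x - V' x ≤ V s0 - V' s0 := fun x => hs0 x (Finset.mem_univ x)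
    have hTV : V s0 ≤ M.r s0 (π' s0) + γ * ∑ s', M.p s0 (π' s0) s' * V s' := by
      by_cases hs : s0 = s
      · subst hs
        simp only [hπ', if_pos rfl]
        exact le_of_lt hlt
      · simp only [hπ', if_neg hs]
        exact le_of_eq (h.1 s0)
    have hV's0 := hV' s0
    have hsum : ∑ s', M.p s0 (π' s0) s' * (V s' - V' s') ≤ (V s0 - V' s0) :=
      sum_prob_le _ _ (M.p_nonneg s0 (π' s0)) (M.p_sum_one s0 (π' s0)) s0 hmax
    have hsplit : ∑ s', M.p s0 (π' s0) s' * (V s' - V' s') =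
        ∑ s', M.p s0 (π' s0) s' * V s' - ∑ s', M.p s0 (π' s0) s' * V' s' := by
      simp [mul_sub, Finset.sum_sub_distrib]
    have hγm := mul_le_mul_of_nonneg_left hsum hγ0
    rw [hsplit, mul_sub] at hγm
    have hm : V s0 - V' s0 ≤ 0 := by nlinarith
    intro x
    linarith [hmax x]
  have hVa : V' s ≤ V s := h.2 π' V' hV' s
  have hV's := hV' s
  simp only [hπ', if_pos rfl] at hV's
  have hss : ∑ s', M.p s a s' * V s' ≤ ∑ s', M.p s a s' * V' s' :=
    Finset.sum_le_sum fun x _ => mul_le_mul_of_nonneg_left (hle x) (M.p_nonneg s a x)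
  nlinarith [mul_le_mul_of_nonneg_left hss hγ0]

end AuxPTUM

/-- **Stopping condition.** Let `τ` be the stopping time of PTUM (the first time
at which the stopping condition holds). Under the event `E`, at every time `t < τ` (i.e. the
stopping condition has not yet held at any time up to `t`) there is at least one model of
`Θ_ε` still in the confidence set `Θ̄_t`. -/
theorem stopping_condition
    {S A Θ : Type*} [Fintype S] [Fintype A] [Fintype Θ] [DecidableEq S] [DecidableEq A]
    (R : PTUMRun S A Θ) (hvalid : R.Valid) (hE : R.EventE)
    (τ : ℕ) (hτ : ∀ t' ≤ τ, ¬ R.StopCond t') :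
    ∀ t ≤ τ, t ≤ R.n → ∃ θ ∈ R.Θeps, θ ∈ R.ΘBar t := by
  intro t ht htn
  by_contra hcon
  push_neg at hcon
  apply hτ t ht
  refine ⟨R.θstar, hE t htn, fun θ' hθ' s => ?_⟩
  have hθ'e : θ' ∉ R.Θeps := fun hm => hcon θ' hm hθ'
  simp only [PTUMRun.Θeps, Set.mem_setOf_eq, not_or, not_exists, not_lt] at hθ'e
  obtain ⟨hr, hp⟩ := hθ'e
  haveI : Nonempty S := ⟨s⟩
  have hγ0 := hvalid.hγ0
  have hγ1 := hvalid.hγ1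
  have h1γ : (0:ℝ) < 1 - R.γ := by linarith
  have hκ0 : 0 ≤ R.κ := le_trans (abs_nonneg _) (hr s (R.πt θ' s))
  have hpγ : ∀ s' a, R.γ * |∑ x, ((R.Mt θ').p s' a x - (R.Mt R.θstar).p s' a x)
      * R.Vt R.θstar x| ≤ R.κ := by
    intro s' a
    rcases eq_or_lt_of_le hγ0 with h0 | h0
    · rw [← h0, zero_mul]; exact hκ0
    · have h1 := (le_div_iff₀ h0).1 (hp s' a)
      linarith [h1, mul_comm R.γ |∑ x, ((R.Mt θ').p s' a x - (R.Mt R.θstar).p s' a x)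
        * R.Vt R.θstar x|]
  -- Bound W := Vt θ* − Vtpi θ* θ'
  have hWb : ∀ x, R.Vt R.θstar x - R.Vtpi R.θstar θ' x ≤ 2 * R.κ / (1 - R.γ) := by
    apply max_rec_bound hγ1
    intro s0 hmax
    have e1 := (hvalid.hopt_t R.θstar).1 s0
    have e2 := hvalid.hval_pi R.θstar θ' s0
    set a := R.πt R.θstar s0 with ha
    have hr' : (R.Mt R.θstar).r s0 a - (R.Mt θ').r s0 a ≤ R.κ := by
      have h1 := hr s0 a
      rw [abs_sub_comm] at h1
      exact le_trans (le_abs_self _) h1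
    -- transition difference bound
    have hX : ∑ x, ((R.Mt θ').p s0 a x - (R.Mt R.θstar).p s0 a x) * R.Vt R.θstar x
        = ∑ x, (R.Mt θ').p s0 a x * R.Vt R.θstar x
          - ∑ x, (R.Mt R.θstar).p s0 a x * R.Vt R.θstar x := by
      simp [sub_mul, Finset.sum_sub_distrib]
    have hd : R.γ * (∑ x, (R.Mt R.θstar).p s0 a x * R.Vt R.θstar x)
        - R.γ * (∑ x, (R.Mt θ').p s0 a x * R.Vt R.θstar x) ≤ R.κ := by
      have h1 := hpγ s0 a
      rw [hX] at h1
      have h2 : -((∑ x, (R.Mt θ').p s0 a x * R.Vt R.θstar x)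
          - ∑ x, (R.Mt R.θstar).p s0 a x * R.Vt R.θstar x)
          ≤ |(∑ x, (R.Mt θ').p s0 a x * R.Vt R.θstar x)
          - ∑ x, (R.Mt R.θstar).p s0 a x * R.Vt R.θstar x| := neg_le_abs _
      nlinarith
    have hsplit : ∑ x, (R.Mt θ').p s0 a x * (R.Vt R.θstar x - R.Vtpi R.θstar θ' x)
        = ∑ x, (R.Mt θ').p s0 a x * R.Vt R.θstar x
          - ∑ x, (R.Mt θ').p s0 a x * R.Vtpi R.θstar θ' x := by
      simp [mul_sub, Finset.sum_sub_distrib]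
    have hqW : ∑ x, (R.Mt θ').p s0 a x * (R.Vt R.θstar x - R.Vtpi R.θstar θ' x)
        ≤ R.Vt R.θstar s0 - R.Vtpi R.θstar θ' s0 :=
      sum_prob_le _ _ ((R.Mt θ').p_nonneg s0 a) ((R.Mt θ').p_sum_one s0 a) s0 hmax
    have h6 := mul_le_mul_of_nonneg_left hqW hγ0
    rw [hsplit, mul_sub] at h6
    linarith
  -- Bound D := Vt θ' − Vt θ*
  have hDb : ∀ x, R.Vt θ' x - R.Vt R.θstar x ≤ 2 * R.κ / (1 - R.γ) := by
    apply max_rec_bound hγ1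
    intro s0 hmax
    have e1 := (hvalid.hopt_t θ').1 s0
    set a := R.πt θ' s0 with ha
    have e2 := isOptimal_ge hγ0 hγ1 (hvalid.hopt_t R.θstar) s0 a
    have hr' : (R.Mt θ').r s0 a - (R.Mt R.θstar).r s0 a ≤ R.κ :=
      le_trans (le_abs_self _) (hr s0 a)
    have hX : ∑ x, ((R.Mt θ').p s0 a x - (R.Mt R.θstar).p s0 a x) * R.Vt R.θstar x
        = ∑ x, (R.Mt θ').p s0 a x * R.Vt R.θstar x
          - ∑ x, (R.Mt R.θstar).p s0 a x * R.Vt R.θstar x := by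
      simp [sub_mul, Finset.sum_sub_distrib]
    have hd : R.γ * (∑ x, (R.Mt θ').p s0 a x * R.Vt R.θstar x)
        - R.γ * (∑ x, (R.Mt R.θstar).p s0 a x * R.Vt R.θstar x) ≤ R.κ := by
      have h1 := hpγ s0 a
      rw [hX] at h1
      have h2 := le_abs_self ((∑ x, (R.Mt θ').p s0 a x * R.Vt R.θstar x)
          - ∑ x, (R.Mt R.θstar).p s0 a x * R.Vt R.θstar x)
      nlinarith
    have hsplit : ∑ x, (R.Mt θ').p s0 a x * (R.Vt θ' x - R.Vt R.θstar x)
        = ∑ x, (R.Mt θ').p s0 a x * R.Vt θ' x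
          - ∑ x, (R.Mt θ').p s0 a x * R.Vt R.θstar x := by
      simp [mul_sub, Finset.sum_sub_distrib]
    have hqW : ∑ x, (R.Mt θ').p s0 a x * (R.Vt θ' x - R.Vt R.θstar x)
        ≤ R.Vt θ' s0 - R.Vt R.θstar s0 :=
      sum_prob_le _ _ ((R.Mt θ').p_nonneg s0 a) ((R.Mt θ').p_sum_one s0 a) s0 hmax
    have h6 := mul_le_mul_of_nonneg_left hqW hγ0
    rw [hsplit, mul_sub] at h6
    linarith
  have heq : 4 * R.κ / (1 - R.γ) = R.ε - 2 * R.Δ * (1 + R.γ) / (1 - R.γ) := by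
    rw [PTUMRun.κ]
    field_simp
    ring
  have hsum : 2 * R.κ / (1 - R.γ) + 2 * R.κ / (1 - R.γ) = 4 * R.κ / (1 - R.γ) := by ring
  linarith [hWb s, hDb s]
end
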